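/- arXiv:math/0107116 — 5 statements merged into one kernel-verified Lean document; each statement's English description precedes it below -/
import Mathlib

section
/- Every torsion-free subgroup Γ of the dodecahedral right-angled Coxeter group W either has infinite index or has index at least 8 = 2³ in W. -/
/-- The 30 adjacency pairs among the 12 facets of the regular dodecahedron
(i.e., the edges of the icosahedron graph), under a fixed identification of
the facets with `Fin 12`: facet `0` is surrounded by facets `1,…,5` (in cyclic
order), facet `11` is surrounded by facets `6,…,10`, and the two pentagonal
"belts" are joined accordingly. -/
def dodecEdges : List (Fin 12 × Fin 12) :=
  [(0,1),(0,2),(0,3),(0,4),(0,5),(1,2),(2,3),(3,4),(4,5),(1,5),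
   (1,6),(1,10),(2,6),(2,7),(3,7),(3,8),(4,8),(4,9),(5,9),(5,10),
   (6,7),(7,8),(8,9),(9,10),(6,10),(6,11),(7,11),(8,11),(9,11),(10,11)]

/-- The facet adjacency relation of the regular dodecahedron. -/
def DodecAdj (i j : Fin 12) : Prop := (i, j) ∈ dodecEdges ∨ (j, i) ∈ dodecEdges

instance : DecidableRel DodecAdj := fun _ _ => inferInstanceAs (Decidable (_ ∨ _))

/-- The Coxeter matrix of the right-angled dodecahedral reflection group:
`1` on the diagonal, `2` for adjacent facets, and `∞` (encoded as `0`)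
for distinct non-adjacent facets. -/
def dodecCoxeterMatrix : CoxeterMatrix (Fin 12) where
  M := Matrix.of fun i j => if i = j then 1 else if DodecAdj i j then 2 else 0
  isSymm := by decide
  diagonal := by decide
  off_diagonal := by
    intro i i' h
    simp only [Matrix.of_apply, if_neg h]
    split_ifs <;> decide

section DodecAux

abbrev dodecT := Multiplicative (Fin 12 → ZMod 2)

def dodecf : Fin 12 → dodecT := fun i => Multiplicative.ofAdd (fun j => if i = j then 1 else 0)

lemma dodecT_sq (x : dodecT) : x * x = 1 := by
  have : (Multiplicative.toAdd x) + (Multiplicative.toAdd x) = 0 := by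
    funext j
    exact CharTwo.add_self_eq_zero _
  exact this

lemma dodecf_liftable : dodecCoxeterMatrix.IsLiftable dodecf := by
  intro i j
  by_cases h : i = j
  · subst h
    rw [dodecCoxeterMatrix.diagonal i, pow_one]
    exact dodecT_sq _
  · have : dodecCoxeterMatrix.M i j = 0 ∨ dodecCoxeterMatrix.M i j = 2 := by
      show (if i = j then 1 else if DodecAdj i j then 2 else 0) = 0 ∨
        (if i = j then 1 else if DodecAdj i j then 2 else 0) = 2
      rw [if_neg h]
      split_ifs <;> simp
    rcases this with h2 | h2 <;> rw [h2]
    · exact pow_zero _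
    · rw [sq]; exact dodecT_sq _

noncomputable def dodecφ : dodecCoxeterMatrix.Group →* dodecT :=
  dodecCoxeterMatrix.toCoxeterSystem.lift ⟨dodecf, dodecf_liftable⟩

lemma dodecφ_simple (i : Fin 12) :
    dodecφ (dodecCoxeterMatrix.toCoxeterSystem.simple i) = dodecf i :=
  dodecCoxeterMatrix.toCoxeterSystem.lift_apply_simple dodecf_liftable i

end DodecAux

/-- Every torsion-free subgroup of the dodecahedral right-angled Coxeter group
either has infinite index (index `0`) or index at least `8 = 2³`. -/
theorem dodec_torsionFree_subgroup_index
    (Γ : Subgroup dodecCoxeterMatrix.Group)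
    (hΓ : ∀ g ∈ Γ, g ≠ 1 → ¬ IsOfFinOrder g) :
    Γ.index = 0 ∨ 8 ≤ Γ.index := by
  by_cases h0 : Γ.index = 0
  · exact Or.inl h0
  right
  set W := dodecCoxeterMatrix.Group with hW
  let cs := dodecCoxeterMatrix.toCoxeterSystem
  let s : Fin 12 → W := cs.simple
  have hcomm : ∀ i j : Fin 12, DodecAdj i j → Commute (s i) (s j) := by
    intro i j hij
    have hne : i ≠ j := by
      rintro rfl
      have : ¬ DodecAdj i i := by revert i; decide
      exact this hij
    have h2 : dodecCoxeterMatrix.M i j = 2 := by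
      show (if i = j then 1 else if DodecAdj i j then 2 else 0) = 2
      rw [if_neg hne, if_pos hij]
    have hpow := cs.simple_mul_simple_pow i j
    rw [h2] at hpow
    have h1 : s i * s j * (s i * s j) = 1 := by rw [← sq]; exact hpow
    have h3 : s i * s j = (s i * s j)⁻¹ := eq_inv_of_mul_eq_one_left h1
    have hi : (s i)⁻¹ = s i := cs.inv_simple i
    have hj : (s j)⁻¹ = s j := cs.inv_simple j
    show s i * s j = s j * s i
    rw [h3, mul_inv_rev, hi, hj]
  have c01 : Commute (s 0) (s 1) := hcomm 0 1 (by decide)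
  have c02 : Commute (s 0) (s 2) := hcomm 0 2 (by decide)
  have c12 : Commute (s 1) (s 2) := hcomm 1 2 (by decide)
  let C := ZMod 2 × ZMod 2 × ZMod 2
  let g : C → W := fun x => s 0 ^ x.1.val * s 1 ^ x.2.1.val * s 2 ^ x.2.2.val
  have hpow2 : ∀ (i : Fin 12) (a b : ZMod 2),
      s i ^ (a + b).val = s i ^ a.val * s i ^ b.val := by
    intro i a b
    have h2 : s i ^ 2 = 1 := cs.simple_sq i
    rw [← pow_add]
    have hv : (a + b).val = (a.val + b.val) % 2 := by
      rcases (show ∀ z : ZMod 2, z = 0 ∨ z = 1 by decide) a with rfl | rfl <;>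
        rcases (show ∀ z : ZMod 2, z = 0 ∨ z = 1 by decide) b with rfl | rfl <;> rfl
    rw [hv, ← pow_eq_pow_mod _ h2]
  have ghom : ∀ x y : C, g (x + y) = g x * g y := by
    rintro ⟨a, b, c⟩ ⟨a', b', c'⟩
    show s 0 ^ (a + a').val * s 1 ^ (b + b').val * s 2 ^ (c + c').val =
      s 0 ^ a.val * s 1 ^ b.val * s 2 ^ c.val * (s 0 ^ a'.val * s 1 ^ b'.val * s 2 ^ c'.val)
    rw [hpow2 0, hpow2 1, hpow2 2]
    have e1 : s 0 ^ a'.val * s 1 ^ b.val = s 1 ^ b.val * s 0 ^ a'.val := (c01.pow_pow _ _).eq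
    have e2 : s 0 ^ a'.val * s 2 ^ c.val = s 2 ^ c.val * s 0 ^ a'.val := (c02.pow_pow _ _).eq
    have e3 : s 1 ^ b'.val * s 2 ^ c.val = s 2 ^ c.val * s 1 ^ b'.val := (c12.pow_pow _ _).eq
    simp only [mul_assoc]
    rw [← mul_assoc (s 0 ^ a'.val) (s 1 ^ b.val), e1, mul_assoc,
        ← mul_assoc (s 1 ^ b'.val) (s 2 ^ c.val), e3, mul_assoc,
        ← mul_assoc (s 0 ^ a'.val) (s 2 ^ c.val), e2, mul_assoc]
  have gzero : g 0 = 1 := by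
    show s 0 ^ (0 : ZMod 2).val * s 1 ^ (0 : ZMod 2).val * s 2 ^ (0 : ZMod 2).val = 1
    norm_num
  have gsq : ∀ x : C, g x * g x = 1 := by
    intro x
    rw [← ghom]
    have : x + x = 0 := by
      rcases x with ⟨a, b, c⟩
      revert a b c
      decide
    rw [this, gzero]
  have φg : ∀ x : C, dodecφ (g x) =
      dodecf 0 ^ x.1.val * dodecf 1 ^ x.2.1.val * dodecf 2 ^ x.2.2.val := by
    intro x
    show dodecφ (cs.simple 0 ^ x.1.val * cs.simple 1 ^ x.2.1.val * cs.simple 2 ^ x.2.2.val) = _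
    rw [map_mul, map_mul, map_pow, map_pow, map_pow,
        dodecφ_simple, dodecφ_simple, dodecφ_simple]
  have hfinj : ∀ x : C,
      dodecf 0 ^ x.1.val * dodecf 1 ^ x.2.1.val * dodecf 2 ^ x.2.2.val = 1 → x = 0 := by
    decide
  have ginj1 : ∀ x : C, g x = 1 → x = 0 := by
    intro x hx
    apply hfinj
    rw [← φg, hx, map_one]
  -- the 8 cosets
  let q : C → (W ⧸ Γ) := fun x => QuotientGroup.mk (g x)
  have qinj : Function.Injective q := by
    intro x y hxy
    have hmem : (g x)⁻¹ * g y ∈ Γ := QuotientGroup.eq.mp hxy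
    have hinv : (g x)⁻¹ = g x := inv_eq_of_mul_eq_one_left (gsq x)
    rw [hinv, ← ghom] at hmem
    have hxy0 : ∀ u v : C, u + v = 0 → u = v := by decide
    by_contra hne
    have hz1 : g (x + y) ≠ 1 := by
      intro h
      have := ginj1 _ h
      exact hne (hxy0 _ _ this)
    have hfin : IsOfFinOrder (g (x + y)) := by
      refine isOfFinOrder_iff_pow_eq_one.mpr ⟨2, two_pos, ?_⟩
      rw [sq]; exact gsq _
    exact hΓ _ hmem hz1 hfin
  have hfin : Finite (W ⧸ Γ) := by
    rw [Subgroup.index_eq_card] at h0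
    exact Nat.finite_of_card_ne_zero h0
  have hle : Nat.card C ≤ Nat.card (W ⧸ Γ) := Nat.card_le_card_of_injective q qinj
  have hC : Nat.card C = 8 := by
    rw [Nat.card_eq_fintype_card]; rfl
  rw [Subgroup.index_eq_card]
  rw [hC] at hle
  exact hle
end

section
/- If Γ is a torsion-free subgroup of the dodecahedral right-angled Coxeter group W of index exactly 8, then Γ is a normal subgroup of W, and Γ is the kernel of some characteristic function λ : W → (ZMod 2)³. -/
/-- The 20 triples of pairwise adjacent facets of the dodecahedron, one for each
vertex of the dodecahedron (these are exactly the triangles of the facet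
adjacency graph). -/
def dodecVertexTriples : List (Fin 12 × Fin 12 × Fin 12) :=
  [(0,1,2),(0,1,5),(0,2,3),(0,3,4),(0,4,5),
   (1,2,6),(1,5,10),(1,6,10),(2,3,7),(2,6,7),
   (3,4,8),(3,7,8),(4,5,9),(4,8,9),(5,9,10),
   (6,7,11),(6,10,11),(7,8,11),(8,9,11),(9,10,11)]

/-- A family of three vectors forms a basis of `(ZMod 2)³` iff it is linearly
independent and spans. -/
def IsBasisFam3 (v : Fin 3 → (Fin 3 → ZMod 2)) : Prop :=
  LinearIndependent (ZMod 2) v ∧ Submodule.span (ZMod 2) (Set.range v) = ⊤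

/-- A characteristic function for the dodecahedral right-angled Coxeter group:
a surjective homomorphism to `(ZMod 2)³` (written multiplicatively) such that the
images of the three simple reflections in the facets meeting at any vertex of the
dodecahedron form a basis of `(ZMod 2)³`. -/
def IsDodecCharacteristicFunction
    (l : dodecCoxeterMatrix.Group →* Multiplicative (Fin 3 → ZMod 2)) : Prop :=
  Function.Surjective l ∧
    ∀ t ∈ dodecVertexTriples,
      IsBasisFam3 ![Multiplicative.toAdd (l (dodecCoxeterMatrix.simple t.1)),
                    Multiplicative.toAdd (l (dodecCoxeterMatrix.simple t.2.1)),
                    Multiplicative.toAdd (l (dodecCoxeterMatrix.simple t.2.2))]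


namespace DodecProofAux

open CoxeterSystem Multiplicative

abbrev Wd := dodecCoxeterMatrix.Group

def cs : CoxeterSystem dodecCoxeterMatrix Wd := dodecCoxeterMatrix.toCoxeterSystem

abbrev sp (i : Fin 12) : Wd := dodecCoxeterMatrix.simple i

lemma sp_sq (i : Fin 12) : sp i * sp i = 1 := cs.simple_mul_simple_self i

lemma M_adj {i j : Fin 12} (hne : i ≠ j) (h : DodecAdj i j) : dodecCoxeterMatrix.M i j = 2 := by
  show (if i = j then 1 else if DodecAdj i j then 2 else 0) = 2
  rw [if_neg hne, if_pos h]

lemma sp_comm {i j : Fin 12} (hne : i ≠ j) (h : DodecAdj i j) : sp i * sp j = sp j * sp i := by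
  have h2 : (sp i * sp j) * (sp i * sp j) = 1 := by
    have h3 := cs.simple_mul_simple_pow i j
    rwa [M_adj hne h, pow_two] at h3
  have hinv : ∀ m : Fin 12, (sp m)⁻¹ = sp m := fun m => cs.inv_simple m
  have h4 := inv_eq_of_mul_eq_one_right h2
  rw [mul_inv_rev, hinv, hinv] at h4
  exact h4.symm

lemma zmod2_cases (u : ZMod 2) : u = 0 ∨ u = 1 := by revert u; decide

/-- `g ^ u` for an exponent `u : ZMod 2`. -/
def pw {M : Type*} [Monoid M] (g : M) (u : ZMod 2) : M := if u = 0 then 1 else g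

lemma pw_zero {M : Type*} [Monoid M] (g : M) : pw g 0 = 1 := if_pos rfl

lemma pw_one {M : Type*} [Monoid M] (g : M) : pw g 1 = g := if_neg (by decide)

lemma pw_mul {M : Type*} [Monoid M] {g : M} (hg : g * g = 1) (u v : ZMod 2) :
    pw g u * pw g v = pw g (u + v) := by
  have h11 : (1 + 1 : ZMod 2) = 0 := by decide
  rcases zmod2_cases u with rfl | rfl <;> rcases zmod2_cases v with rfl | rfl <;>
    simp [pw_zero, pw_one, h11, hg]

lemma pw_comm {M : Type*} [Monoid M] {g h : M} (hc : g * h = h * g) (u v : ZMod 2) :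
    pw g u * pw h v = pw h v * pw g u := by
  rcases zmod2_cases u with rfl | rfl <;> rcases zmod2_cases v with rfl | rfl <;>
    simp [pw_zero, pw_one, hc]

lemma pw_map {M N : Type*} [Monoid M] [Monoid N] (φ : M →* N) (g : M) (u : ZMod 2) :
    φ (pw g u) = pw (φ g) u := by
  rcases zmod2_cases u with rfl | rfl <;> simp [pw_zero, pw_one]

lemma swap3 {M : Type*} [Monoid M] {a b : M} (h : a * b = b * a) (x : M) :
    a * (b * x) = b * (a * x) := by rw [← mul_assoc, h, mul_assoc]

/-- The element `sᵢ^(v 0) sⱼ^(v 1) s_k^(v 2)`. -/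
def gv (i j k : Fin 12) (v : Fin 3 → ZMod 2) : Wd :=
  pw (sp i) (v 0) * pw (sp j) (v 1) * pw (sp k) (v 2)

lemma gv_zero (i j k : Fin 12) : gv i j k 0 = 1 := by
  simp [gv, pw_zero]

lemma gv_single0 (i j k : Fin 12) : gv i j k (Pi.single 0 1) = sp i := by
  have h0 : ((Pi.single (0 : Fin 3) (1 : ZMod 2)) : Fin 3 → ZMod 2) 0 = 1 := by decide
  have h1 : ((Pi.single (0 : Fin 3) (1 : ZMod 2)) : Fin 3 → ZMod 2) 1 = 0 := by decide
  have h2 : ((Pi.single (0 : Fin 3) (1 : ZMod 2)) : Fin 3 → ZMod 2) 2 = 0 := by decide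
  rw [gv, h0, h1, h2, pw_one, pw_zero, pw_zero, mul_one, mul_one]

lemma gv_single1 (i j k : Fin 12) : gv i j k (Pi.single 1 1) = sp j := by
  have h0 : ((Pi.single (1 : Fin 3) (1 : ZMod 2)) : Fin 3 → ZMod 2) 0 = 0 := by decide
  have h1 : ((Pi.single (1 : Fin 3) (1 : ZMod 2)) : Fin 3 → ZMod 2) 1 = 1 := by decide
  have h2 : ((Pi.single (1 : Fin 3) (1 : ZMod 2)) : Fin 3 → ZMod 2) 2 = 0 := by decide
  rw [gv, h0, h1, h2, pw_zero, pw_one, pw_zero, one_mul, mul_one]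

lemma gv_single2 (i j k : Fin 12) : gv i j k (Pi.single 2 1) = sp k := by
  have h0 : ((Pi.single (2 : Fin 3) (1 : ZMod 2)) : Fin 3 → ZMod 2) 0 = 0 := by decide
  have h1 : ((Pi.single (2 : Fin 3) (1 : ZMod 2)) : Fin 3 → ZMod 2) 1 = 0 := by decide
  have h2 : ((Pi.single (2 : Fin 3) (1 : ZMod 2)) : Fin 3 → ZMod 2) 2 = 1 := by decide
  rw [gv, h0, h1, h2, pw_zero, pw_zero, pw_one, one_mul, one_mul]

lemma gv_mul {i j k : Fin 12} (cij : sp i * sp j = sp j * sp i)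
    (cik : sp i * sp k = sp k * sp i) (cjk : sp j * sp k = sp k * sp j)
    (v w : Fin 3 → ZMod 2) : gv i j k v * gv i j k w = gv i j k (v + w) := by
  unfold gv
  simp only [Pi.add_apply, ← pw_mul (sp_sq i), ← pw_mul (sp_sq j), ← pw_mul (sp_sq k)]
  simp only [mul_assoc]
  rw [swap3 (pw_comm cik.symm (v 2) (w 0)), swap3 (pw_comm cjk.symm (v 2) (w 1)),
    swap3 (pw_comm cij.symm (v 1) (w 0))]

def fgen (i : Fin 12) : Multiplicative (Fin 12 → ZMod 2) := ofAdd (Pi.single i 1)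

lemma mul_self_one (x : Multiplicative (Fin 12 → ZMod 2)) : x * x = 1 := by
  have h : ∀ b : ZMod 2, b + b = 0 := by decide
  have : x.toAdd + x.toAdd = 0 := funext fun m => h _
  calc x * x = ofAdd (x.toAdd + x.toAdd) := rfl
    _ = ofAdd 0 := by rw [this]
    _ = 1 := rfl

lemma liftable : dodecCoxeterMatrix.IsLiftable fgen := by
  intro i j
  by_cases h : i = j
  · subst h
    rw [dodecCoxeterMatrix.diagonal i, pow_one]
    exact mul_self_one _
  · have hM : dodecCoxeterMatrix.M i j = 2 ∨ dodecCoxeterMatrix.M i j = 0 := by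
      show (if i = j then 1 else if DodecAdj i j then 2 else 0) = 2 ∨ _
      rw [if_neg h]
      by_cases h2 : DodecAdj i j
      · left; rw [if_pos h2]
      · right
        show (if i = j then 1 else if DodecAdj i j then 2 else 0) = 0
        rw [if_neg h, if_neg h2]
    rcases hM with h' | h' <;> rw [h']
    · rw [pow_two]; exact mul_self_one _
    · exact pow_zero _

noncomputable def piW : Wd →* Multiplicative (Fin 12 → ZMod 2) := cs.lift ⟨fgen, liftable⟩

lemma piW_simple (i : Fin 12) : piW (sp i) = fgen i := cs.lift_apply_simple liftable i

lemma gv_eq_one {i j k : Fin 12} (hij : i ≠ j) (hik : i ≠ k) (hjk : j ≠ k)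
    {v : Fin 3 → ZMod 2} (h : gv i j k v = 1) : v = 0 := by
  have hπ : pw (fgen i) (v 0) * pw (fgen j) (v 1) * pw (fgen k) (v 2) = 1 := by
    have h2 := congrArg piW h
    rwa [map_one, gv, map_mul, map_mul, pw_map, pw_map, pw_map, piW_simple, piW_simple,
      piW_simple] at h2
  rcases zmod2_cases (v 0) with h0 | h0 <;> rcases zmod2_cases (v 1) with h1 | h1 <;>
    rcases zmod2_cases (v 2) with h2 | h2 <;>
      simp only [h0, h1, h2, pw_zero, pw_one, one_mul, mul_one] at hπ ⊢
  · funext m; fin_cases m <;> simp [h0, h1, h2]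
  all_goals {
    exfalso
    apply_fun Multiplicative.toAdd at hπ
    simp only [fgen, toAdd_mul, toAdd_ofAdd, toAdd_one] at hπ
    have hi := congrFun hπ i
    have hj := congrFun hπ j
    have hk := congrFun hπ k
    simp [Pi.single_apply, Pi.add_apply, Pi.zero_apply, hij, hik, hjk,
      hij.symm, hik.symm, hjk.symm] at hi hj hk
  }

end DodecProofAux

set_option maxHeartbeats 2000000 in
open DodecProofAux Multiplicative in
/-- A torsion-free subgroup of index exactly `8` in the dodecahedral right-angled
Coxeter group is normal and is the kernel of some characteristic function. -/
theorem dodec_torsionFree_index_eight_is_kernel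
    (Γ : Subgroup dodecCoxeterMatrix.Group)
    (hΓ : ∀ g ∈ Γ, g ≠ 1 → ¬ IsOfFinOrder g) (hidx : Γ.index = 8) :
    Γ.Normal ∧
      ∃ l : dodecCoxeterMatrix.Group →* Multiplicative (Fin 3 → ZMod 2),
        IsDodecCharacteristicFunction l ∧ Γ = l.ker := by
  classical
  have hcard : Nat.card (Wd ⧸ Γ) = 8 := by rw [← Subgroup.index_eq_card]; exact hidx
  haveI : Finite (Wd ⧸ Γ) := Nat.finite_of_card_ne_zero (by rw [hcard]; norm_num)
  have haddself : ∀ a : Fin 3 → ZMod 2, a + a = 0 := by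
    intro a; funext m
    have : ∀ b : ZMod 2, b + b = 0 := by decide
    exact this _
  -- torsion elements act freely on the coset space
  have free : ∀ g : Wd, g * g = 1 → g ≠ 1 → ∀ x : Wd ⧸ Γ, ¬ g • x = x := by
    intro g hg hg1 x hx
    obtain ⟨w, rfl⟩ := QuotientGroup.mk_surjective x
    have e1 : g • (QuotientGroup.mk w : Wd ⧸ Γ) = QuotientGroup.mk (g * w) := rfl
    rw [e1] at hx
    have hginv : g⁻¹ = g := inv_eq_of_mul_eq_one_right hg
    have hmem : w⁻¹ * g * w ∈ Γ := by
      have h2 := QuotientGroup.eq.mp hx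
      rwa [mul_inv_rev, hginv] at h2
    refine hΓ _ hmem ?_ ?_
    · intro h1
      apply hg1
      have h2 : g = w * (w⁻¹ * g * w) * w⁻¹ := by group
      rw [h1] at h2
      simpa using h2
    · refine isOfFinOrder_iff_pow_eq_one.mpr ⟨2, two_pos, ?_⟩
      have h2 : (w⁻¹ * g * w) ^ 2 = w⁻¹ * (g * g) * w := by rw [pow_two]; group
      rw [h2, hg]
      group
  -- simply transitive action of vertex special subgroups
  have stepA : ∀ i j k : Fin 12, i ≠ j → i ≠ k → j ≠ k →
      sp i * sp j = sp j * sp i → sp i * sp k = sp k * sp i → sp j * sp k = sp k * sp j →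
      ∀ x : Wd ⧸ Γ, Function.Bijective (fun v => gv i j k v • x) := by
    intro i j k hij hik hjk cij cik cjk x
    rw [Nat.bijective_iff_injective_and_card]
    constructor
    · intro v w hvw0
      have hvw : gv i j k v • x = gv i j k w • x := hvw0
      have h1 : gv i j k (w + v) • x = x := by
        calc gv i j k (w + v) • x = gv i j k w • gv i j k v • x := by
              rw [← mul_smul, gv_mul cij cik cjk]
          _ = gv i j k w • gv i j k w • x := by rw [hvw]
          _ = gv i j k (w + w) • x := by rw [← mul_smul, gv_mul cij cik cjk]
          _ = x := by rw [haddself w, gv_zero, one_smul]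
      have hz : w + v = 0 := by
        by_contra hne
        refine free (gv i j k (w + v)) ?_ ?_ x h1
        · rw [gv_mul cij cik cjk, haddself, gv_zero]
        · intro hone; exact hne (gv_eq_one hij hik hjk hone)
      funext m
      have h3 : ∀ a b : ZMod 2, a + b = 0 → b = a := by decide
      exact h3 _ _ (congrFun hz m)
    · rw [Nat.card_eq_fintype_card, hcard]
      decide
  -- the base torsor structure coming from the vertex {0, 1, 2}
  have c01 : sp 0 * sp 1 = sp 1 * sp 0 := sp_comm (by decide) (by decide)
  have c02 : sp 0 * sp 2 = sp 2 * sp 0 := sp_comm (by decide) (by decide)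
  have c12 : sp 1 * sp 2 = sp 2 * sp 1 := sp_comm (by decide) (by decide)
  set x0 : Wd ⧸ Γ := QuotientGroup.mk 1 with hx0def
  let F : (Fin 3 → ZMod 2) → Wd ⧸ Γ := fun v => gv 0 1 2 v • x0
  have hF : ∀ v, F v = gv 0 1 2 v • x0 := fun _ => rfl
  have hFbij : Function.Bijective F :=
    stepA 0 1 2 (by decide) (by decide) (by decide) c01 c02 c12 x0
  obtain ⟨Finv, hFinv1, hFinv2⟩ := Function.bijective_iff_has_inverse.mp hFbij
  have hF0 : F 0 = x0 := by rw [hF, gv_zero, one_smul]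
  -- a group element `g` with translation vectors `a, b` on the first two letters and
  -- value `c` at the base point acts like `s_i^{v0} s_j^{v1} s_k^{v2} ↦ v0 a + v1 b + v2 c`
  have keyGen : ∀ (i j k : Fin 12) (a b c : Fin 3 → ZMod 2),
      (∀ v, sp i • F v = F (v + a)) → (∀ v, sp j • F v = F (v + b)) →
      sp k • F 0 = F c →
      ∀ v, gv i j k v • F 0 = F (v 0 • a + v 1 • b + v 2 • c) := by
    intro i j k a b c hi hj hk0 v
    have step3 : pw (sp k) (v 2) • F 0 = F (v 2 • c) := by
      rcases zmod2_cases (v 2) with h | h <;> rw [h]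
      · rw [pw_zero, one_smul]; congr 1; rw [zero_smul]
      · rw [pw_one, one_smul]; exact hk0
    have step2 : pw (sp j) (v 1) • F (v 2 • c) = F (v 2 • c + v 1 • b) := by
      rcases zmod2_cases (v 1) with h | h <;> rw [h]
      · rw [pw_zero, one_smul]; congr 1; rw [zero_smul, add_zero]
      · rw [pw_one, one_smul]; exact hj _
    have step1 : pw (sp i) (v 0) • F (v 2 • c + v 1 • b) = F (v 2 • c + v 1 • b + v 0 • a) := by
      rcases zmod2_cases (v 0) with h | h <;> rw [h]
      · rw [pw_zero, one_smul]; congr 1; rw [zero_smul, add_zero]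
      · rw [pw_one, one_smul]; exact hi _
    calc gv i j k v • F 0
        = pw (sp i) (v 0) • (pw (sp j) (v 1) • (pw (sp k) (v 2) • F 0)) := by
          rw [gv, mul_smul, mul_smul]
      _ = F (v 2 • c + v 1 • b + v 0 • a) := by rw [step3, step2, step1]
      _ = F (v 0 • a + v 1 • b + v 2 • c) := by congr 1; abel
  -- such combination maps are bijective
  have psiBij : ∀ i j k : Fin 12, i ≠ j → i ≠ k → j ≠ k →
      DodecAdj i j → DodecAdj i k → DodecAdj j k →
      ∀ a b c : Fin 3 → ZMod 2,
      (∀ v, gv i j k v • F 0 = F (v 0 • a + v 1 • b + v 2 • c)) →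
      Function.Bijective (fun v : Fin 3 → ZMod 2 => v 0 • a + v 1 • b + v 2 • c) := by
    intro i j k hij hik hjk dij dik djk a b c hkey
    have hb2 := stepA i j k hij hik hjk (sp_comm hij dij) (sp_comm hik dik)
      (sp_comm hjk djk) (F 0)
    constructor
    · intro v w h
      have h' : v 0 • a + v 1 • b + v 2 • c = w 0 • a + w 1 • b + w 2 • c := h
      refine hb2.injective ?_
      show gv i j k v • F 0 = gv i j k w • F 0
      rw [hkey, hkey, h']
    · intro u
      obtain ⟨v, hv⟩ := hb2.surjective (F u)
      exact ⟨v, hFbij.injective ((hkey v).symm.trans hv)⟩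
  -- propagation of the translation property along triangles
  have transKey : ∀ i j l : Fin 12, i ≠ j → i ≠ l → j ≠ l →
      DodecAdj i j → DodecAdj i l → DodecAdj j l →
      (∃ a, ∀ v, sp i • F v = F (v + a)) → (∃ a, ∀ v, sp j • F v = F (v + a)) →
      ∃ c, ∀ v, sp l • F v = F (v + c) := by
    rintro i j l hij hil hjl dij dil djl ⟨a, ha⟩ ⟨b, hb⟩
    have cij := sp_comm hij dij
    have cil := sp_comm hil dil
    have cjl := sp_comm hjl djl
    obtain ⟨c, hc⟩ : ∃ c, sp l • F 0 = F c := ⟨Finv (sp l • F 0), (hFinv2 _).symm⟩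
    have key := keyGen i j l a b c ha hb hc
    have hψ := psiBij i j l hij hil hjl dij dil djl a b c key
    refine ⟨c, fun v => ?_⟩
    obtain ⟨u, rfl⟩ := hψ.surjective v
    set e2u : Fin 3 → ZMod 2 := Pi.single 2 1 + u with he2u
    have hmul : sp l * gv i j l u = gv i j l e2u := by
      rw [he2u, ← gv_single2 i j l, gv_mul cij cil cjl]
    have hkey2 : gv i j l e2u • F 0 = F (e2u 0 • a + e2u 1 • b + e2u 2 • c) := key e2u
    have e0 : ((Pi.single (2 : Fin 3) (1 : ZMod 2)) : Fin 3 → ZMod 2) 0 = 0 := by decide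
    have e1 : ((Pi.single (2 : Fin 3) (1 : ZMod 2)) : Fin 3 → ZMod 2) 1 = 0 := by decide
    have e2 : ((Pi.single (2 : Fin 3) (1 : ZMod 2)) : Fin 3 → ZMod 2) 2 = 1 := by decide
    have hsum : e2u 0 • a + e2u 1 • b + e2u 2 • c
        = u 0 • a + u 1 • b + u 2 • c + c := by
      rw [he2u]
      simp only [Pi.add_apply, e0, e1, e2, zero_add, add_smul, one_smul]
      abel
    calc sp l • F (u 0 • a + u 1 • b + u 2 • c)
        = (sp l * gv i j l u) • F 0 := by rw [← key u, mul_smul]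
      _ = gv i j l e2u • F 0 := by rw [hmul]
      _ = F (u 0 • a + u 1 • b + u 2 • c + c) := by rw [hkey2, hsum]
  -- the three base translations
  have base : ∀ (m : Fin 12) (e : Fin 3 → ZMod 2), gv 0 1 2 e = sp m →
      ∃ c, ∀ v, sp m • F v = F (v + c) := by
    intro m e he
    refine ⟨e, fun v => ?_⟩
    rw [hF, hF, ← mul_smul, ← he, gv_mul c01 c02 c12, add_comm]
  have h0 := base 0 (Pi.single 0 1) (gv_single0 0 1 2)
  have h1 := base 1 (Pi.single 1 1) (gv_single1 0 1 2)
  have h2 := base 2 (Pi.single 2 1) (gv_single2 0 1 2)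
  have h3 := transKey 0 2 3 (by decide) (by decide) (by decide) (by decide) (by decide)
    (by decide) h0 h2
  have h4 := transKey 0 3 4 (by decide) (by decide) (by decide) (by decide) (by decide)
    (by decide) h0 h3
  have h5 := transKey 0 4 5 (by decide) (by decide) (by decide) (by decide) (by decide)
    (by decide) h0 h4
  have h6 := transKey 1 2 6 (by decide) (by decide) (by decide) (by decide) (by decide)
    (by decide) h1 h2
  have h7 := transKey 2 3 7 (by decide) (by decide) (by decide) (by decide) (by decide)
    (by decide) h2 h3
  have h8 := transKey 3 4 8 (by decide) (by decide) (by decide) (by decide) (by decide)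
    (by decide) h3 h4
  have h9 := transKey 4 5 9 (by decide) (by decide) (by decide) (by decide) (by decide)
    (by decide) h4 h5
  have h10 := transKey 5 9 10 (by decide) (by decide) (by decide) (by decide) (by decide)
    (by decide) h5 h9
  have h11 := transKey 6 7 11 (by decide) (by decide) (by decide) (by decide) (by decide)
    (by decide) h6 h7
  have hsimple : ∀ m : Fin 12, ∃ c, ∀ v, sp m • F v = F (v + c) := by
    intro m
    fin_cases m
    exacts [h0, h1, h2, h3, h4, h5, h6, h7, h8, h9, h10, h11]
  -- every element of W acts as a translation
  have hall : ∀ w : Wd, ∃ c, ∀ v, w • F v = F (v + c) := by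
    intro w
    refine cs.simple_induction (p := fun w => ∃ c, ∀ v, w • F v = F (v + c)) w (fun i => hsimple i) ⟨0, fun v => by rw [one_smul, add_zero]⟩ ?_
    rintro w w' ⟨c, hc⟩ ⟨c', hc'⟩
    exact ⟨c' + c, fun v => by rw [mul_smul, hc', hc, add_assoc]⟩
  have funiq : ∀ (w : Wd) (c : Fin 3 → ZMod 2), (∀ v, w • F v = F (v + c)) →
      Finv (w • x0) = c := by
    intro w c h
    rw [← hF0, h 0, zero_add, hFinv1]
  -- the characteristic function
  let lmap : Wd →* Multiplicative (Fin 3 → ZMod 2) :=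
    { toFun := fun w => ofAdd (Finv (w • x0))
      map_one' := by
        show ofAdd (Finv ((1 : Wd) • x0)) = 1
        rw [one_smul, ← hF0, hFinv1]
        rfl
      map_mul' := by
        intro w u
        obtain ⟨c, hc⟩ := hall w
        obtain ⟨c', hc'⟩ := hall u
        have h1 : (w * u) • x0 = F (c' + c) := by
          rw [mul_smul, ← hF0, hc' 0, hc, zero_add]
        show ofAdd (Finv ((w * u) • x0)) = ofAdd (Finv (w • x0)) * ofAdd (Finv (u • x0))
        rw [h1, hFinv1, funiq w c hc, funiq u c' hc', ← ofAdd_add, add_comm] }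
  have lmap_apply : ∀ w : Wd, lmap w = ofAdd (Finv (w • x0)) := fun _ => rfl
  have hx0mem : ∀ w : Wd, w • x0 = x0 ↔ w ∈ Γ := by
    intro w
    have e1 : w • x0 = QuotientGroup.mk (w * 1) := rfl
    rw [e1, mul_one, hx0def]
    constructor
    · intro h
      have h2 := QuotientGroup.eq.mp h
      simpa using h2
    · intro h
      refine QuotientGroup.eq.mpr ?_
      simpa using h
  have hker : ∀ w : Wd, lmap w = 1 ↔ w ∈ Γ := by
    intro w
    rw [lmap_apply]
    constructor
    · intro h
      have h0' : Finv (w • x0) = 0 := by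
        simpa using congrArg Multiplicative.toAdd h
      have h1 : w • x0 = F 0 := by rw [← h0', hFinv2]
      rw [hF0] at h1
      exact (hx0mem w).mp h1
    · intro h
      have h1 : w • x0 = x0 := (hx0mem w).mpr h
      rw [h1, ← hF0, hFinv1]
      rfl
  have hkerEq : Γ = lmap.ker := by
    ext w
    rw [MonoidHom.mem_ker]
    exact (hker w).symm
  refine ⟨by rw [hkerEq]; exact MonoidHom.normal_ker lmap, lmap, ⟨?_, ?_⟩, hkerEq⟩
  · -- surjectivity
    intro y
    refine ⟨gv 0 1 2 y.toAdd, ?_⟩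
    show ofAdd (Finv (gv 0 1 2 y.toAdd • x0)) = y
    rw [← hF, hFinv1, ofAdd_toAdd]
  · -- basis condition at each vertex triple
    have hbasis : ∀ i j k : Fin 12, i ≠ j → i ≠ k → j ≠ k →
        DodecAdj i j → DodecAdj i k → DodecAdj j k →
        IsBasisFam3 ![Multiplicative.toAdd (lmap (dodecCoxeterMatrix.simple i)),
          Multiplicative.toAdd (lmap (dodecCoxeterMatrix.simple j)),
          Multiplicative.toAdd (lmap (dodecCoxeterMatrix.simple k))] := by
      intro i j k n12 n13 n23 d12 d13 d23
      obtain ⟨ci, hci⟩ := hall (sp i)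
      obtain ⟨cj, hcj⟩ := hall (sp j)
      obtain ⟨ck, hck⟩ := hall (sp k)
      have hk0 : sp k • F 0 = F ck := by rw [hck 0, zero_add]
      have key := keyGen i j k ci cj ck hci hcj hk0
      have hψ := psiBij i j k n12 n13 n23 d12 d13 d23 ci cj ck key
      have ei : Multiplicative.toAdd (lmap (dodecCoxeterMatrix.simple i)) = ci := by
        rw [lmap_apply, toAdd_ofAdd]; exact funiq _ _ hci
      have ej : Multiplicative.toAdd (lmap (dodecCoxeterMatrix.simple j)) = cj := by
        rw [lmap_apply, toAdd_ofAdd]; exact funiq _ _ hcj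
      have ek : Multiplicative.toAdd (lmap (dodecCoxeterMatrix.simple k)) = ck := by
        rw [lmap_apply, toAdd_ofAdd]; exact funiq _ _ hck
      rw [IsBasisFam3, ei, ej, ek]
      constructor
      · rw [Fintype.linearIndependent_iff]
        intro g hg m
        have hsum : ∑ n : Fin 3, g n • ![ci, cj, ck] n = g 0 • ci + g 1 • cj + g 2 • ck := by
          rw [Fin.sum_univ_three]
          simp
        rw [hsum] at hg
        have h0' : (fun v : Fin 3 → ZMod 2 => v 0 • ci + v 1 • cj + v 2 • ck) g
            = (fun v : Fin 3 → ZMod 2 => v 0 • ci + v 1 • cj + v 2 • ck) 0 := by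
          show g 0 • ci + g 1 • cj + g 2 • ck = _
          rw [hg]
          simp
        have hg0 := hψ.injective h0'
        rw [hg0]
        simp
      · rw [eq_top_iff]
        rintro u -
        obtain ⟨v, hv⟩ := hψ.surjective u
        rw [← hv]
        have m0 : ci ∈ Set.range ![ci, cj, ck] := ⟨0, by simp⟩
        have m1 : cj ∈ Set.range ![ci, cj, ck] := ⟨1, by simp⟩
        have m2 : ck ∈ Set.range ![ci, cj, ck] := ⟨2, by simp⟩
        exact Submodule.add_mem _ (Submodule.add_mem _
          (Submodule.smul_mem _ _ (Submodule.subset_span m0))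
          (Submodule.smul_mem _ _ (Submodule.subset_span m1)))
          (Submodule.smul_mem _ _ (Submodule.subset_span m2))
    intro t ht
    fin_cases ht <;>
      exact hbasis _ _ _ (by decide) (by decide) (by decide) (by decide) (by decide) (by decide)
end

section
/- For a labeling λ of the dodecahedron, let A_λ = { a ∈ A : λ ∘ a = g ∘ λ for some g ∈ GL₃(𝔽₂) } be its stabilizer in the symmetry group A. Then the maximum of |A_λ| over all labelings λ is exactly 24; i.e., there is a labeling with |A_λ| = 24, and every labeling satisfies |A_λ| ≤ 24. -/
/-- A labeling of the dodecahedron: an assignment of a vector in `(ZMod 2)³` to each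
of the 12 facets such that the labels of any three facets meeting at a vertex form
a basis of `(ZMod 2)³`. -/
def IsDodecLabeling (l : Fin 12 → (Fin 3 → ZMod 2)) : Prop :=
  ∀ t ∈ dodecVertexTriples, IsBasisFam3 ![l t.1, l t.2.1, l t.2.2]

/-- The stabilizer `A_λ` of a labeling `l`: symmetries `a` of the dodecahedron
(automorphisms of the facet adjacency graph) such that `l ∘ a = g ∘ l` for some
`g ∈ GL₃(𝔽₂)`. -/
def DodecLabelingStabilizer (l : Fin 12 → (Fin 3 → ZMod 2)) :
    Set (Equiv.Perm (Fin 12)) :=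
  {a | (∀ i j, DodecAdj (a i) (a j) ↔ DodecAdj i j) ∧
    ∃ g : (Fin 3 → ZMod 2) ≃ₗ[ZMod 2] (Fin 3 → ZMod 2), l ∘ ⇑a = ⇑g ∘ l}

def rowsA : Fin 12 → Nat := ![62,1125,203,405,809,1555,3206,2380,2712,3376,2658,1984]

def adjB (i j : Fin 12) : Bool := (rowsA i).testBit j.val
def cn2 (x z y : Fin 12) : Fin 12 :=
  (((List.finRange 12).find? fun w => adjB x w && adjB z w && decide (w ≠ y))).getD 0
def reconV (a0 a1 a2 : Fin 12) : Fin 12 → Fin 12 :=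
  let r3 := cn2 a0 a2 a1
  let r4 := cn2 a0 r3 a2
  let r5 := cn2 a0 r4 r3
  let r6 := cn2 a1 a2 a0
  let r7 := cn2 a2 r3 a0
  let r8 := cn2 r3 r4 a0
  let r9 := cn2 r4 r5 a0
  let r10 := cn2 r5 a1 a0
  let r11 := cn2 r6 r7 a2
  ![a0,a1,a2,r3,r4,r5,r6,r7,r8,r9,r10,r11]

def validTriples : List (Fin 12 × Fin 12 × Fin 12) :=
  [(0,1,2),(0,1,5),(0,2,1),(0,2,3),(0,3,2),(0,3,4),(0,4,3),(0,4,5),(0,5,1),(0,5,4),(1,0,2),(1,0,5),(1,2,0),(1,2,6),(1,5,0),(1,5,10),(1,6,2),(1,6,10),(1,10,5),(1,10,6),(2,0,1),(2,0,3),(2,1,0),(2,1,6),(2,3,0),(2,3,7),(2,6,1),(2,6,7),(2,7,3),(2,7,6),(3,0,2),(3,0,4),(3,2,0),(3,2,7),(3,4,0),(3,4,8),(3,7,2),(3,7,8),(3,8,4),(3,8,7),(4,0,3),(4,0,5),(4,3,0),(4,3,8),(4,5,0),(4,5,9),(4,8,3),(4,8,9),(4,9,5),(4,9,8),(5,0,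1),(5,0,4),(5,1,0),(5,1,10),(5,4,0),(5,4,9),(5,9,4),(5,9,10),(5,10,1),(5,10,9),(6,1,2),(6,1,10),(6,2,1),(6,2,7),(6,7,2),(6,7,11),(6,10,1),(6,10,11),(6,11,7),(6,11,10),(7,2,3),(7,2,6),(7,3,2),(7,3,8),(7,6,2),(7,6,11),(7,8,3),(7,8,11),(7,11,6),(7,11,8),(8,3,4),(8,3,7),(8,4,3),(8,4,9),(8,7,3),(8,7,11),(8,9,4),(8,9,11),(8,11,7),(8,11,9),(9,4,5),(9,4,8),(9,5,4),(9,5,10),(9,8,4),(9,8,11),(9,10,5),(9,10,11),(9,11,8),(9,11,10),(10,1,5),(10,1,6),(10,5,1),(10,5,9),(10,6,1),(10,6,11),(10,9,5),(10,9,11),(10,11,6),(10,11,9),(11,6,7),(11,6,10),(11,7,6),(11,7,8),(11,8,7),(11,8,9),(11,9,8),(11,9,10),(11,10,6),(11,10,9)]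

def autosL : List (Fin 12 → Fin 12) :=
  [![0,1,2,3,4,5,6,7,8,9,10,11],
   ![0,1,5,4,3,2,10,9,8,7,6,11],
   ![0,2,1,5,4,3,6,10,9,8,7,11],
   ![0,2,3,4,5,1,7,8,9,10,6,11],
   ![0,3,2,1,5,4,7,6,10,9,8,11],
   ![0,3,4,5,1,2,8,9,10,6,7,11],
   ![0,4,3,2,1,5,8,7,6,10,9,11],
   ![0,4,5,1,2,3,9,10,6,7,8,11],
   ![0,5,1,2,3,4,10,6,7,8,9,11],
   ![0,5,4,3,2,1,9,8,7,6,10,11],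
   ![1,0,2,6,10,5,3,7,11,9,4,8],
   ![1,0,5,10,6,2,4,9,11,7,3,8],
   ![1,2,0,5,10,6,3,4,9,11,7,8],
   ![1,2,6,10,5,0,7,11,9,4,3,8],
   ![1,5,0,2,6,10,4,3,7,11,9,8],
   ![1,5,10,6,2,0,9,11,7,3,4,8],
   ![1,6,2,0,5,10,7,3,4,9,11,8],
   ![1,6,10,5,0,2,11,9,4,3,7,8],
   ![1,10,5,0,2,6,9,4,3,7,11,8],
   ![1,10,6,2,0,5,11,7,3,4,9,8],
   ![2,0,1,6,7,3,5,10,11,8,4,9],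
   ![2,0,3,7,6,1,4,8,11,10,5,9],
   ![2,1,0,3,7,6,5,4,8,11,10,9],
   ![2,1,6,7,3,0,10,11,8,4,5,9],
   ![2,3,0,1,6,7,4,5,10,11,8,9],
   ![2,3,7,6,1,0,8,11,10,5,4,9],
   ![2,6,1,0,3,7,10,5,4,8,11,9],
   ![2,6,7,3,0,1,11,8,4,5,10,9],
   ![2,7,3,0,1,6,8,4,5,10,11,9],
   ![2,7,6,1,0,3,11,10,5,4,8,9],
   ![3,0,2,7,8,4,1,6,11,9,5,10],
   ![3,0,4,8,7,2,5,9,11,6,1,10],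
   ![3,2,0,4,8,7,1,5,9,11,6,10],
   ![3,2,7,8,4,0,6,11,9,5,1,10],
   ![3,4,0,2,7,8,5,1,6,11,9,10],
   ![3,4,8,7,2,0,9,11,6,1,5,10],
   ![3,7,2,0,4,8,6,1,5,9,11,10],
   ![3,7,8,4,0,2,11,9,5,1,6,10],
   ![3,8,4,0,2,7,9,5,1,6,11,10],
   ![3,8,7,2,0,4,11,6,1,5,9,10],
   ![4,0,3,8,9,5,2,7,11,10,1,6],
   ![4,0,5,9,8,3,1,10,11,7,2,6],
   ![4,3,0,5,9,8,2,1,10,11,7,6],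
   ![4,3,8,9,5,0,7,11,10,1,2,6],
   ![4,5,0,3,8,9,1,2,7,11,10,6],
   ![4,5,9,8,3,0,10,11,7,2,1,6],
   ![4,8,3,0,5,9,7,2,1,10,11,6],
   ![4,8,9,5,0,3,11,10,1,2,7,6],
   ![4,9,5,0,3,8,10,1,2,7,11,6],
   ![4,9,8,3,0,5,11,7,2,1,10,6],
   ![5,0,1,10,9,4,2,6,11,8,3,7],
   ![5,0,4,9,10,1,3,8,11,6,2,7],
   ![5,1,0,4,9,10,2,3,8,11,6,7],
   ![5,1,10,9,4,0,6,11,8,3,2,7],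
   ![5,4,0,1,10,9,3,2,6,11,8,7],
   ![5,4,9,10,1,0,8,11,6,2,3,7],
   ![5,9,4,0,1,10,8,3,2,6,11,7],
   ![5,9,10,1,0,4,11,6,2,3,8,7],
   ![5,10,1,0,4,9,6,2,3,8,11,7],
   ![5,10,9,4,0,1,11,8,3,2,6,7],
   ![6,1,2,7,11,10,0,3,8,9,5,4],
   ![6,1,10,11,7,2,5,9,8,3,0,4],
   ![6,2,1,10,11,7,0,5,9,8,3,4],
   ![6,2,7,11,10,1,3,8,9,5,0,4],
   ![6,7,2,1,10,11,3,0,5,9,8,4],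
   ![6,7,11,10,1,2,8,9,5,0,3,4],
   ![6,10,1,2,7,11,5,0,3,8,9,4],
   ![6,10,11,7,2,1,9,8,3,0,5,4],
   ![6,11,7,2,1,10,8,3,0,5,9,4],
   ![6,11,10,1,2,7,9,5,0,3,8,4],
   ![7,2,3,8,11,6,0,4,9,10,1,5],
   ![7,2,6,11,8,3,1,10,9,4,0,5],
   ![7,3,2,6,11,8,0,1,10,9,4,5],
   ![7,3,8,11,6,2,4,9,10,1,0,5],
   ![7,6,2,3,8,11,1,0,4,9,10,5],
   ![7,6,11,8,3,2,10,9,4,0,1,5],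
   ![7,8,3,2,6,11,4,0,1,10,9,5],
   ![7,8,11,6,2,3,9,10,1,0,4,5],
   ![7,11,6,2,3,8,10,1,0,4,9,5],
   ![7,11,8,3,2,6,9,4,0,1,10,5],
   ![8,3,4,9,11,7,0,5,10,6,2,1],
   ![8,3,7,11,9,4,2,6,10,5,0,1],
   ![8,4,3,7,11,9,0,2,6,10,5,1],
   ![8,4,9,11,7,3,5,10,6,2,0,1],
   ![8,7,3,4,9,11,2,0,5,10,6,1],
   ![8,7,11,9,4,3,6,10,5,0,2,1],
   ![8,9,4,3,7,11,5,0,2,6,10,1],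
   ![8,9,11,7,3,4,10,6,2,0,5,1],
   ![8,11,7,3,4,9,6,2,0,5,10,1],
   ![8,11,9,4,3,7,10,5,0,2,6,1],
   ![9,4,5,10,11,8,0,1,6,7,3,2],
   ![9,4,8,11,10,5,3,7,6,1,0,2],
   ![9,5,4,8,11,10,0,3,7,6,1,2],
   ![9,5,10,11,8,4,1,6,7,3,0,2],
   ![9,8,4,5,10,11,3,0,1,6,7,2],
   ![9,8,11,10,5,4,7,6,1,0,3,2],
   ![9,10,5,4,8,11,1,0,3,7,6,2],
   ![9,10,11,8,4,5,6,7,3,0,1,2],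
   ![9,11,8,4,5,10,7,3,0,1,6,2],
   ![9,11,10,5,4,8,6,1,0,3,7,2],
   ![10,1,5,9,11,6,0,4,8,7,2,3],
   ![10,1,6,11,9,5,2,7,8,4,0,3],
   ![10,5,1,6,11,9,0,2,7,8,4,3],
   ![10,5,9,11,6,1,4,8,7,2,0,3],
   ![10,6,1,5,9,11,2,0,4,8,7,3],
   ![10,6,11,9,5,1,7,8,4,0,2,3],
   ![10,9,5,1,6,11,4,0,2,7,8,3],
   ![10,9,11,6,1,5,8,7,2,0,4,3],
   ![10,11,6,1,5,9,7,2,0,4,8,3],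
   ![10,11,9,5,1,6,8,4,0,2,7,3],
   ![11,6,7,8,9,10,2,3,4,5,1,0],
   ![11,6,10,9,8,7,1,5,4,3,2,0],
   ![11,7,6,10,9,8,2,1,5,4,3,0],
   ![11,7,8,9,10,6,3,4,5,1,2,0],
   ![11,8,7,6,10,9,3,2,1,5,4,0],
   ![11,8,9,10,6,7,4,5,1,2,3,0],
   ![11,9,8,7,6,10,4,3,2,1,5,0],
   ![11,9,10,6,7,8,5,1,2,3,4,0],
   ![11,10,6,7,8,9,1,2,3,4,5,0],
   ![11,10,9,8,7,6,5,4,3,2,1,0]]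

def goodPermL : List (Fin 12 → Fin 12) :=
  [![0,1,2,3,4,5,6,7,8,9,10,11],
   ![0,1,5,4,3,2,10,9,8,7,6,11],
   ![1,0,2,6,10,5,3,7,11,9,4,8],
   ![1,0,5,10,6,2,4,9,11,7,3,8],
   ![2,7,3,0,1,6,8,4,5,10,11,9],
   ![2,7,6,1,0,3,11,10,5,4,8,9],
   ![3,4,0,2,7,8,5,1,6,11,9,10],
   ![3,4,8,7,2,0,9,11,6,1,5,10],
   ![4,3,0,5,9,8,2,1,10,11,7,6],
   ![4,3,8,9,5,0,7,11,10,1,2,6],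
   ![5,9,4,0,1,10,8,3,2,6,11,7],
   ![5,9,10,1,0,4,11,6,2,3,8,7],
   ![6,10,1,2,7,11,5,0,3,8,9,4],
   ![6,10,11,7,2,1,9,8,3,0,5,4],
   ![7,2,3,8,11,6,0,4,9,10,1,5],
   ![7,2,6,11,8,3,1,10,9,4,0,5],
   ![8,11,7,3,4,9,6,2,0,5,10,1],
   ![8,11,9,4,3,7,10,5,0,2,6,1],
   ![9,5,4,8,11,10,0,3,7,6,1,2],
   ![9,5,10,11,8,4,1,6,7,3,0,2],
   ![10,6,1,5,9,11,2,0,4,8,7,3],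
   ![10,6,11,9,5,1,7,8,4,0,2,3],
   ![11,8,7,6,10,9,3,2,1,5,4,0],
   ![11,8,9,10,6,7,4,5,1,2,3,0]]

def l0 : Fin 12 → (Fin 3 → ZMod 2) :=
  ![![1,0,0],![0,1,0],![0,0,1],![0,1,1],![1,0,1],![1,1,1],![1,0,1],![1,1,1],![0,1,0],![0,0,1],![0,1,1],![1,0,0]]

section DodecAux

set_option maxRecDepth 8000
set_option maxHeartbeats 2000000

instance (i j : Fin 12) : Decidable (DodecAdj i j) := by unfold DodecAdj; exact inferInstance

/-! ### Decidable combinatorial core -/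

lemma bor_elim : ∀ a b : Bool, (a || b) = true → a = true ∨ b = true := by decide

lemma band_elim : ∀ a b : Bool, (a && b) = true → a = true ∧ b = true := by decide

lemma adj_iff : ∀ i j : Fin 12, DodecAdj i j ↔ adjB i j = true := by decide

lemma cn2_spec : ∀ x z y w : Fin 12, adjB x z = true → adjB x y = true → adjB z y = true →
    adjB x w = true → adjB z w = true → w ≠ y → w = cn2 x z y := by decide

lemma valid_complete : ∀ a b c : Fin 12, adjB a b = true → adjB a c = true →
    adjB b c = true → ((a, b, c) : Fin 12 × Fin 12 × Fin 12) ∈ validTriples := by decide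

lemma autos_eq : validTriples.map (fun t => reconV t.1 t.2.1 t.2.2) = autosL := by decide

lemma AUT_ADJb : (autosL.all fun f => (List.finRange 12).all fun i =>
    (List.finRange 12).all fun j => adjB (f i) (f j) == adjB i j) = true := by decide

lemma AUT_ADJ : ∀ f ∈ autosL, ∀ i j, adjB (f i) (f j) = adjB i j := by
  intro f hf i j
  exact beq_iff_eq.mp (List.all_eq_true.mp (List.all_eq_true.mp
    (List.all_eq_true.mp AUT_ADJb f hf) i (List.mem_finRange i)) j (List.mem_finRange j))

lemma AUT_INJb : (autosL.all fun f => (List.finRange 12).all fun i =>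
    (List.finRange 12).all fun j => (f i != f j) || (i == j)) = true := by decide

lemma AUT_INJ : ∀ f ∈ autosL, ∀ i j : Fin 12, f i = f j → i = j := by
  intro f hf i j hij
  have h := List.all_eq_true.mp (List.all_eq_true.mp
    (List.all_eq_true.mp AUT_INJb f hf) i (List.mem_finRange i)) j (List.mem_finRange j)
  rcases bor_elim _ _ h with h1 | h2
  · exact absurd hij (bne_iff_ne.mp h1)
  · exact beq_iff_eq.mp h2

lemma ORD5b : (autosL.all fun f =>
    (!((List.finRange 12).all fun i => f (f (f (f (f i)))) == i)) ||
    ((List.finRange 12).all fun i => f i == i) ||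
    ((List.finRange 12).any fun i =>
      (adjB i (f i) && (f i != i)) || (adjB i (f (f i)) && (f (f i) != i)))) = true := by decide

lemma ORD5 : ∀ f ∈ autosL, (∀ i, f (f (f (f (f i)))) = i) →
    (∀ i, f i = i) ∨ ∃ i, (adjB i (f i) = true ∧ f i ≠ i) ∨
      (adjB i (f (f i)) = true ∧ f (f i) ≠ i) := by
  intro f hf h5
  have hb := List.all_eq_true.mp ORD5b f hf
  have hpre : ((List.finRange 12).all fun i => f (f (f (f (f i)))) == i) = true :=
    List.all_eq_true.mpr fun i _ => beq_iff_eq.mpr (h5 i)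
  rw [hpre] at hb
  simp only [Bool.not_true, Bool.false_or] at hb
  rcases bor_elim _ _ hb with h1 | h2
  · exact Or.inl fun i => beq_iff_eq.mp (List.all_eq_true.mp h1 i (List.mem_finRange i))
  · obtain ⟨i, -, hi⟩ := List.any_eq_true.mp h2
    refine Or.inr ⟨i, ?_⟩
    rcases bor_elim _ _ hi with hc | hc
    · obtain ⟨h1, h2⟩ := band_elim _ _ hc
      exact Or.inl ⟨h1, bne_iff_ne.mp h2⟩
    · obtain ⟨h1, h2⟩ := band_elim _ _ hc
      exact Or.inr ⟨h1, bne_iff_ne.mp h2⟩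

lemma EDGETRI : ∀ i j : Fin 12, adjB i j = true → ∃ t ∈ dodecVertexTriples,
    (t.1 = i ∧ t.2.1 = j) ∨ (t.1 = i ∧ t.2.2 = j) ∨ (t.2.1 = i ∧ t.2.2 = j) ∨
    (t.1 = j ∧ t.2.1 = i) ∨ (t.1 = j ∧ t.2.2 = i) ∨ (t.2.1 = j ∧ t.2.2 = i) := by decide

lemma M5 : ∀ M : Matrix (Fin 3) (Fin 3) (ZMod 2), M * (M * (M * (M * M))) = 1 → M = 1 := by
  decide

lemma DVD5 : ∀ d : Fin 121, d.val ∣ 120 → 24 < d.val → 5 ∣ d.val := by decide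

/-! ### Every graph automorphism is in `autosL` -/

lemma AUTO_MEM (a : Equiv.Perm (Fin 12))
    (H : ∀ i j, DodecAdj (a i) (a j) ↔ DodecAdj i j) : ⇑a ∈ autosL := by
  have HB : ∀ i j, adjB (a i) (a j) = adjB i j := by
    intro i j
    have h := ((adj_iff (a i) (a j)).symm.trans ((H i j).trans (adj_iff i j)))
    revert h
    cases adjB (a i) (a j) <;> cases adjB i j <;> simp
  have INJ : ∀ i j : Fin 12, i ≠ j → a i ≠ a j := fun i j h he => h (a.injective he)
  have hb : ∀ i j : Fin 12, adjB i j = true → adjB (a i) (a j) = true :=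
    fun i j h => (HB i j).trans h
  have e3 : cn2 (a 0) (a 2) (a 1) = a 3 :=
    (cn2_spec _ _ _ _ (hb 0 2 rfl) (hb 0 1 rfl) (hb 2 1 rfl) (hb 0 3 rfl) (hb 2 3 rfl)
      (INJ 3 1 (by decide))).symm
  have e4 : cn2 (a 0) (a 3) (a 2) = a 4 :=
    (cn2_spec _ _ _ _ (hb 0 3 rfl) (hb 0 2 rfl) (hb 3 2 rfl) (hb 0 4 rfl) (hb 3 4 rfl)
      (INJ 4 2 (by decide))).symm
  have e5 : cn2 (a 0) (a 4) (a 3) = a 5 :=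
    (cn2_spec _ _ _ _ (hb 0 4 rfl) (hb 0 3 rfl) (hb 4 3 rfl) (hb 0 5 rfl) (hb 4 5 rfl)
      (INJ 5 3 (by decide))).symm
  have e6 : cn2 (a 1) (a 2) (a 0) = a 6 :=
    (cn2_spec _ _ _ _ (hb 1 2 rfl) (hb 1 0 rfl) (hb 2 0 rfl) (hb 1 6 rfl) (hb 2 6 rfl)
      (INJ 6 0 (by decide))).symm
  have e7 : cn2 (a 2) (a 3) (a 0) = a 7 :=
    (cn2_spec _ _ _ _ (hb 2 3 rfl) (hb 2 0 rfl) (hb 3 0 rfl) (hb 2 7 rfl) (hb 3 7 rfl)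
      (INJ 7 0 (by decide))).symm
  have e8 : cn2 (a 3) (a 4) (a 0) = a 8 :=
    (cn2_spec _ _ _ _ (hb 3 4 rfl) (hb 3 0 rfl) (hb 4 0 rfl) (hb 3 8 rfl) (hb 4 8 rfl)
      (INJ 8 0 (by decide))).symm
  have e9 : cn2 (a 4) (a 5) (a 0) = a 9 :=
    (cn2_spec _ _ _ _ (hb 4 5 rfl) (hb 4 0 rfl) (hb 5 0 rfl) (hb 4 9 rfl) (hb 5 9 rfl)
      (INJ 9 0 (by decide))).symm
  have e10 : cn2 (a 5) (a 1) (a 0) = a 10 :=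
    (cn2_spec _ _ _ _ (hb 5 1 rfl) (hb 5 0 rfl) (hb 1 0 rfl) (hb 5 10 rfl) (hb 1 10 rfl)
      (INJ 10 0 (by decide))).symm
  have e11 : cn2 (a 6) (a 7) (a 2) = a 11 :=
    (cn2_spec _ _ _ _ (hb 6 7 rfl) (hb 6 2 rfl) (hb 7 2 rfl) (hb 6 11 rfl) (hb 7 11 rfl)
      (INJ 11 2 (by decide))).symm
  have f4 : cn2 (a 0) (cn2 (a 0) (a 2) (a 1)) (a 2) = a 4 := by simp only [e3, e4]
  have f5 : cn2 (a 0) (cn2 (a 0) (cn2 (a 0) (a 2) (a 1)) (a 2)) (cn2 (a 0) (a 2) (a 1)) = a 5 := by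
    simp only [e3, e4, e5]
  have f7 : cn2 (a 2) (cn2 (a 0) (a 2) (a 1)) (a 0) = a 7 := by simp only [e3, e7]
  have f8 : cn2 (cn2 (a 0) (a 2) (a 1)) (cn2 (a 0) (cn2 (a 0) (a 2) (a 1)) (a 2)) (a 0) = a 8 := by
    simp only [e3, e4, e8]
  have f9 : cn2 (cn2 (a 0) (cn2 (a 0) (a 2) (a 1)) (a 2))
      (cn2 (a 0) (cn2 (a 0) (cn2 (a 0) (a 2) (a 1)) (a 2)) (cn2 (a 0) (a 2) (a 1))) (a 0)
      = a 9 := by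
    simp only [e3, e4, e5, e9]
  have f10 : cn2 (cn2 (a 0) (cn2 (a 0) (cn2 (a 0) (a 2) (a 1)) (a 2)) (cn2 (a 0) (a 2) (a 1)))
      (a 1) (a 0) = a 10 := by
    simp only [e3, e4, e5, e10]
  have f11 : cn2 (cn2 (a 1) (a 2) (a 0)) (cn2 (a 2) (cn2 (a 0) (a 2) (a 1)) (a 0)) (a 2)
      = a 11 := by
    simp only [e3, e6, e7, e11]
  have hf : ⇑a = reconV (a 0) (a 1) (a 2) := by
    funext i
    fin_cases i
    · rfl
    · rfl
    · rfl
    · exact e3.symm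
    · exact f4.symm
    · exact f5.symm
    · exact e6.symm
    · exact f7.symm
    · exact f8.symm
    · exact f9.symm
    · exact f10.symm
    · exact f11.symm
  have ht : ((a 0, a 1, a 2) : Fin 12 × Fin 12 × Fin 12) ∈ validTriples :=
    valid_complete _ _ _ (hb 0 1 rfl) (hb 0 2 rfl) (hb 1 2 rfl)
  rw [← autos_eq]
  exact List.mem_map.mpr ⟨(a 0, a 1, a 2), ht, hf.symm⟩

/-! ### Basic facts about labelings -/

lemma isBasisFam3_iff (v : Fin 3 → (Fin 3 → ZMod 2)) : IsBasisFam3 v ↔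
    ((∀ c : Fin 3 → ZMod 2, (∑ i, c i • v i) = 0 → c = 0) ∧
      ∀ x : Fin 3 → ZMod 2, ∃ c : Fin 3 → ZMod 2, (∑ i, c i • v i) = x) := by
  unfold IsBasisFam3
  apply and_congr
  · rw [Fintype.linearIndependent_iff]
    constructor
    · exact fun h c hc => funext fun i => h c hc i
    · exact fun h c hc i => congr_fun (h c hc) i
  · rw [Submodule.eq_top_iff']
    exact forall_congr' fun x => Submodule.mem_span_range_iff_exists_fun (ZMod 2)

lemma isBasisFam3_ne {x y z : Fin 3 → ZMod 2} (hv : IsBasisFam3 ![x, y, z]) :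
    x ≠ y ∧ x ≠ z ∧ y ≠ z := by
  have hinj := hv.1.injective
  refine ⟨fun h => ?_, fun h => ?_, fun h => ?_⟩
  · exact absurd (hinj (show ![x,y,z] 0 = ![x,y,z] 1 from h)) (by decide)
  · exact absurd (hinj (show ![x,y,z] 0 = ![x,y,z] 2 from h)) (by decide)
  · exact absurd (hinj (show ![x,y,z] 1 = ![x,y,z] 2 from h)) (by decide)

lemma labeling_ne {l : Fin 12 → (Fin 3 → ZMod 2)} (hl : IsDodecLabeling l) {i j : Fin 12}
    (hadj : adjB i j = true) : l i ≠ l j := by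
  obtain ⟨t, ht, hc⟩ := EDGETRI i j hadj
  obtain ⟨h01, h02, h12⟩ := isBasisFam3_ne (hl t ht)
  rcases hc with ⟨h1, h2⟩ | ⟨h1, h2⟩ | ⟨h1, h2⟩ | ⟨h1, h2⟩ | ⟨h1, h2⟩ | ⟨h1, h2⟩ <;>
    subst h1 <;> subst h2
  · exact h01
  · exact h02
  · exact h12
  · exact h01.symm
  · exact h02.symm
  · exact h12.symm

/-! ### The stabilizer as a subgroup -/

def StabG (l : Fin 12 → (Fin 3 → ZMod 2)) : Subgroup (Equiv.Perm (Fin 12)) where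
  carrier := DodecLabelingStabilizer l
  one_mem' := ⟨fun i j => Iff.rfl, LinearEquiv.refl _ _, rfl⟩
  mul_mem' := by
    rintro a b ⟨ha1, ga, hga⟩ ⟨hb1, gb, hgb⟩
    refine ⟨fun i j => ((ha1 (b i) (b j)).trans (hb1 i j)), gb.trans ga, funext fun i => ?_⟩
    show l (a (b i)) = (gb.trans ga) (l i)
    rw [LinearEquiv.trans_apply]
    rw [show l (a (b i)) = ga (l (b i)) from congr_fun hga (b i),
      show l (b i) = gb (l i) from congr_fun hgb i]
  inv_mem' := by
    rintro a ⟨ha1, g, hg⟩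
    refine ⟨fun i j => ?_, g.symm, funext fun i => ?_⟩
    · have h := (ha1 (a⁻¹ i) (a⁻¹ j))
      rw [(Equiv.Perm.eq_inv_iff_eq (f := a)).mp rfl, (Equiv.Perm.eq_inv_iff_eq (f := a)).mp rfl] at h
      exact h.symm
    · show l (a⁻¹ i) = g.symm (l i)
      have h := congr_fun hg (a⁻¹ i)
      simp only [Function.comp_apply] at h
      rw [(Equiv.Perm.eq_inv_iff_eq (f := a)).mp rfl] at h
      rw [h, LinearEquiv.symm_apply_apply]

def AutG : Subgroup (Equiv.Perm (Fin 12)) where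
  carrier := {a | ∀ i j, DodecAdj (a i) (a j) ↔ DodecAdj i j}
  one_mem' := fun i j => Iff.rfl
  mul_mem' := by
    rintro a b ha hb
    exact fun i j => (ha (b i) (b j)).trans (hb i j)
  inv_mem' := by
    rintro a ha i j
    have h := ha (a⁻¹ i) (a⁻¹ j)
    rw [(Equiv.Perm.eq_inv_iff_eq (f := a)).mp rfl, (Equiv.Perm.eq_inv_iff_eq (f := a)).mp rfl] at h
    exact h.symm

lemma autG_coe_image :
    (fun a : Equiv.Perm (Fin 12) => ⇑a) '' (AutG : Set (Equiv.Perm (Fin 12)))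
      = {f | f ∈ autosL} := by
  ext f
  constructor
  · rintro ⟨a, ha, rfl⟩
    exact AUTO_MEM a ha
  · intro hf
    have hinj : Function.Injective f := fun i j h => AUT_INJ f hf i j h
    have hbij : Function.Bijective f := hinj.bijective_of_finite
    refine ⟨Equiv.ofBijective f hbij, fun i j => ?_, rfl⟩
    show DodecAdj (f i) (f j) ↔ DodecAdj i j
    rw [adj_iff, adj_iff, AUT_ADJ f hf i j]

lemma card_autG : Nat.card AutG = 120 := by
  have h0 : Nat.card AutG = Nat.card ↥(AutG : Set (Equiv.Perm (Fin 12))) := rfl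
  rw [h0, Nat.card_coe_set_eq,
    ← Set.ncard_image_of_injective (AutG : Set (Equiv.Perm (Fin 12))) Equiv.coe_fn_injective,
    autG_coe_image]
  have h1 : {f | f ∈ autosL} = ((autosL.toFinset : Finset (Fin 12 → Fin 12)) : Set _) := by
    ext f; simp [List.mem_toFinset]
  rw [h1, Set.ncard_coe_finset, List.toFinset_card_of_nodup (by decide)]
  rfl

/-! ### Upper bound -/

theorem stab_le (l : Fin 12 → (Fin 3 → ZMod 2)) (hl : IsDodecLabeling l) :
    Nat.card (DodecLabelingStabilizer l) ≤ 24 := by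
  by_contra hcon
  push_neg at hcon
  have hcards : Nat.card (DodecLabelingStabilizer l) = Nat.card (StabG l) :=
    Nat.card_congr (Equiv.subtypeEquivRight fun _ => Iff.rfl)
  have hle : StabG l ≤ AutG := fun a ha => ha.1
  have hdvd : Nat.card (StabG l) ∣ 120 := card_autG ▸ Subgroup.card_dvd_of_le hle
  rw [hcards] at hcon
  have hb : Nat.card (StabG l) ≤ 120 := Nat.le_of_dvd (by norm_num) hdvd
  have h5 : 5 ∣ Nat.card (StabG l) := by
    have := DVD5 ⟨Nat.card (StabG l), by omega⟩ hdvd hcon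
    exact this
  haveI : Fintype { x : Equiv.Perm (Fin 12) // x ∈ StabG l } := Fintype.ofFinite _
  haveI : Fact (Nat.Prime 5) := ⟨by norm_num⟩
  obtain ⟨x, hx⟩ := exists_prime_orderOf_dvd_card (G := ↥(StabG l)) 5 (by rwa [← Nat.card_eq_fintype_card])
  have hx5 : x ^ 5 = 1 := by rw [← hx]; exact pow_orderOf_eq_one x
  set a : Equiv.Perm (Fin 12) := (x : Equiv.Perm (Fin 12)) with ha_def
  have ha5 : a ^ 5 = 1 := by
    have h := congrArg (fun y : (StabG l) => (y : Equiv.Perm (Fin 12))) hx5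
    simpa using h
  have hane : a ≠ 1 := by
    intro h
    have hx1 : x = 1 := Subtype.ext h
    rw [hx1, orderOf_one] at hx
    norm_num at hx
  have hmem : a ∈ DodecLabelingStabilizer l := x.2
  obtain ⟨hadjp, g, hg⟩ := hmem
  have hgi : ∀ i, l (a i) = g (l i) := fun i => congr_fun hg i
  have h5p : ∀ i, a (a (a (a (a i)))) = i := by
    intro i
    have h := congr_arg (fun p : Equiv.Perm (Fin 12) => p i) ha5
    simpa [pow_succ, Equiv.Perm.mul_apply] using h
  have hg5 : ∀ i, g (g (g (g (g (l i))))) = l i := by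
    intro i
    conv_rhs => rw [← h5p i]
    rw [hgi, hgi, hgi, hgi, hgi]
  have hb012 := hl (0, 1, 2) (by decide)
  have hspan : Submodule.span (ZMod 2) (Set.range l) = ⊤ := by
    rw [eq_top_iff, ← hb012.2]
    apply Submodule.span_mono
    rintro x ⟨i, rfl⟩
    fin_cases i
    exacts [⟨0, rfl⟩, ⟨1, rfl⟩, ⟨2, rfl⟩]
  have hcomp : ((g.toLinearMap ∘ₗ (g.toLinearMap ∘ₗ (g.toLinearMap ∘ₗ
      (g.toLinearMap ∘ₗ g.toLinearMap)))) : (Fin 3 → ZMod 2) →ₗ[ZMod 2] (Fin 3 → ZMod 2))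
      = LinearMap.id := by
    apply LinearMap.ext_on_range hspan
    intro i
    exact hg5 i
  have hM : LinearMap.toMatrix' (g.toLinearMap :
      (Fin 3 → ZMod 2) →ₗ[ZMod 2] (Fin 3 → ZMod 2)) = 1 := by
    apply M5
    rw [← LinearMap.toMatrix'_comp, ← LinearMap.toMatrix'_comp, ← LinearMap.toMatrix'_comp,
      ← LinearMap.toMatrix'_comp, hcomp, LinearMap.toMatrix'_id]
  have hgid : ∀ v : Fin 3 → ZMod 2, g v = v := by
    have hgl : (g.toLinearMap : (Fin 3 → ZMod 2) →ₗ[ZMod 2] (Fin 3 → ZMod 2))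
        = LinearMap.id := by
      have h := congrArg Matrix.toLin' hM
      rwa [Matrix.toLin'_toMatrix', Matrix.toLin'_one] at h
    intro v
    exact congrArg (fun F : (Fin 3 → ZMod 2) →ₗ[ZMod 2] (Fin 3 → ZMod 2) => F v) hgl
  have hfix : ∀ i, l (a i) = l i := fun i => (hgi i).trans (hgid (l i))
  have hmemA : ⇑a ∈ autosL := AUTO_MEM a hadjp
  rcases ORD5 _ hmemA h5p with hid | ⟨i, hcase⟩
  · exact hane (Equiv.ext hid)
  · rcases hcase with ⟨hadj, -⟩ | ⟨hadj, -⟩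
    · exact labeling_ne hl hadj (hfix i).symm
    · have h2 : l (a (a i)) = l i := by rw [hfix, hfix]
      exact labeling_ne hl hadj h2.symm

/-! ### The labeling with stabilizer of order 24 -/

lemma isDodecLabeling_l0 : IsDodecLabeling l0 := by
  have KEY : (dodecVertexTriples.all fun t => decide
      ((∀ c : Fin 3 → ZMod 2, (∑ i, c i • (![l0 t.1, l0 t.2.1, l0 t.2.2]) i) = 0 → c = 0) ∧
        ∀ x : Fin 3 → ZMod 2, ∃ c : Fin 3 → ZMod 2,
          (∑ i, c i • (![l0 t.1, l0 t.2.1, l0 t.2.2]) i) = x)) = true := by decide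
  intro t ht
  rw [isBasisFam3_iff]
  exact of_decide_eq_true (List.all_eq_true.mp KEY t ht)

lemma L24b : (autosL.all fun f =>
    (!((List.finRange 12).all fun i => decide (l0 (f i) =
      (l0 i) 0 • l0 (f 0) + (l0 i) 1 • l0 (f 1) + (l0 i) 2 • l0 (f 2)))) ||
    decide (f ∈ goodPermL)) = true := by decide

lemma L24 : ∀ f ∈ autosL,
    (∀ i : Fin 12, l0 (f i) = (l0 i) 0 • l0 (f 0) + (l0 i) 1 • l0 (f 1) + (l0 i) 2 • l0 (f 2)) →
    f ∈ goodPermL := by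
  intro f hf hE
  have hb := List.all_eq_true.mp L24b f hf
  have hpre : ((List.finRange 12).all fun i => decide (l0 (f i) =
      (l0 i) 0 • l0 (f 0) + (l0 i) 1 • l0 (f 1) + (l0 i) 2 • l0 (f 2))) = true :=
    List.all_eq_true.mpr fun i _ => decide_eq_true (hE i)
  rw [hpre] at hb
  simp only [Bool.not_true, Bool.false_or] at hb
  exact of_decide_eq_true hb

lemma memStab (f finv : Fin 12 → Fin 12) (hfi : ∀ i, finv (f i) = i) (hif : ∀ i, f (finv i) = i)
    (hadj : ∀ i j, adjB (f i) (f j) = adjB i j)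
    (M N : Matrix (Fin 3) (Fin 3) (ZMod 2)) (hMN : M * N = 1) (hNM : N * M = 1)
    (hM : ∀ i, l0 (f i) = M.mulVec (l0 i)) :
    f ∈ (fun a : Equiv.Perm (Fin 12) => ⇑a) '' DodecLabelingStabilizer l0 := by
  refine ⟨⟨f, finv, hfi, hif⟩, ⟨fun i j => ?_, ?_⟩, rfl⟩
  · show DodecAdj (f i) (f j) ↔ DodecAdj i j
    rw [adj_iff, adj_iff, hadj i j]
  · refine ⟨LinearEquiv.ofLinear (Matrix.toLin' M) (Matrix.toLin' N)
      (by rw [← Matrix.toLin'_mul, hMN, Matrix.toLin'_one])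
      (by rw [← Matrix.toLin'_mul, hNM, Matrix.toLin'_one]), funext fun i => ?_⟩
    show l0 (f i) = (LinearEquiv.ofLinear (Matrix.toLin' M) (Matrix.toLin' N) _ _) (l0 i)
    rw [LinearEquiv.ofLinear_apply, Matrix.toLin'_apply, hM i]

lemma stab_image : (fun a : Equiv.Perm (Fin 12) => ⇑a) '' DodecLabelingStabilizer l0
    = {f | f ∈ goodPermL} := by
  ext f
  constructor
  · rintro ⟨a, ⟨hadj, g, hg⟩, rfl⟩
    have hmemA : ⇑a ∈ autosL := AUTO_MEM a hadj
    have hgi : ∀ i, l0 (a i) = g (l0 i) := fun i => congr_fun hg i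
    have hexp : ∀ v : Fin 3 → ZMod 2, v = v 0 • l0 0 + v 1 • l0 1 + v 2 • l0 2 := by decide
    have G : ∀ v : Fin 3 → ZMod 2, g v = v 0 • l0 (a 0) + v 1 • l0 (a 1) + v 2 • l0 (a 2) := by
      intro v
      conv_lhs => rw [hexp v]
      rw [map_add, map_add, map_smul, map_smul, map_smul, ← hgi 0, ← hgi 1, ← hgi 2]
    exact L24 _ hmemA fun i => (hgi i).trans (G (l0 i))
  · intro hf
    have hf' : f ∈ goodPermL := hf
    fin_cases hf'
    · exact memStab ![0,1,2,3,4,5,6,7,8,9,10,11] ![0,1,2,3,4,5,6,7,8,9,10,11] (by decide) (by decide) (by decide) !![1,0,0;0,1,0;0,0,1] !![1,0,0;0,1,0;0,0,1] (by decide) (by decide) (by decide)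
    · exact memStab ![0,1,5,4,3,2,10,9,8,7,6,11] ![0,1,5,4,3,2,10,9,8,7,6,11] (by decide) (by decide) (by decide) !![1,0,1;0,1,1;0,0,1] !![1,0,1;0,1,1;0,0,1] (by decide) (by decide) (by decide)
    · exact memStab ![1,0,2,6,10,5,3,7,11,9,4,8] ![1,0,2,6,10,5,3,7,11,9,4,8] (by decide) (by decide) (by decide) !![0,1,0;1,0,0;0,0,1] !![0,1,0;1,0,0;0,0,1] (by decide) (by decide) (by decide)
    · exact memStab ![1,0,5,10,6,2,4,9,11,7,3,8] ![1,0,5,10,6,2,4,9,11,7,3,8] (by decide) (by decide) (by decide) !![0,1,1;1,0,1;0,0,1] !![0,1,1;1,0,1;0,0,1] (by decide) (by decide) (by decide)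
    · exact memStab ![2,7,3,0,1,6,8,4,5,10,11,9] ![3,4,0,2,7,8,5,1,6,11,9,10] (by decide) (by decide) (by decide) !![0,1,0;0,1,1;1,1,1] !![0,1,1;1,0,0;1,1,0] (by decide) (by decide) (by decide)
    · exact memStab ![2,7,6,1,0,3,11,10,5,4,8,9] ![4,3,0,5,9,8,2,1,10,11,7,6] (by decide) (by decide) (by decide) !![0,1,1;0,1,0;1,1,1] !![1,0,1;0,1,0;1,1,0] (by decide) (by decide) (by decide)
    · exact memStab ![3,4,0,2,7,8,5,1,6,11,9,10] ![2,7,3,0,1,6,8,4,5,10,11,9] (by decide) (by decide) (by decide) !![0,1,1;1,0,0;1,1,0] !![0,1,0;0,1,1;1,1,1] (by decide) (by decide) (by decide)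
    · exact memStab ![3,4,8,7,2,0,9,11,6,1,5,10] ![5,9,4,0,1,10,8,3,2,6,11,7] (by decide) (by decide) (by decide) !![0,1,0;1,0,1;1,1,0] !![1,0,1;1,0,0;1,1,1] (by decide) (by decide) (by decide)
    · exact memStab ![4,3,0,5,9,8,2,1,10,11,7,6] ![2,7,6,1,0,3,11,10,5,4,8,9] (by decide) (by decide) (by decide) !![1,0,1;0,1,0;1,1,0] !![0,1,1;0,1,0;1,1,1] (by decide) (by decide) (by decide)
    · exact memStab ![4,3,8,9,5,0,7,11,10,1,2,6] ![5,9,10,1,0,4,11,6,2,3,8,7] (by decide) (by decide) (by decide) !![1,0,0;0,1,1;1,1,0] !![1,0,0;1,0,1;1,1,1] (by decide) (by decide) (by decide)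
    · exact memStab ![5,9,4,0,1,10,8,3,2,6,11,7] ![3,4,8,7,2,0,9,11,6,1,5,10] (by decide) (by decide) (by decide) !![1,0,1;1,0,0;1,1,1] !![0,1,0;1,0,1;1,1,0] (by decide) (by decide) (by decide)
    · exact memStab ![5,9,10,1,0,4,11,6,2,3,8,7] ![4,3,8,9,5,0,7,11,10,1,2,6] (by decide) (by decide) (by decide) !![1,0,0;1,0,1;1,1,1] !![1,0,0;0,1,1;1,1,0] (by decide) (by decide) (by decide)
    · exact memStab ![6,10,1,2,7,11,5,0,3,8,9,4] ![7,2,3,8,11,6,0,4,9,10,1,5] (by decide) (by decide) (by decide) !![1,0,0;0,1,1;1,1,0] !![1,0,0;1,0,1;1,1,1] (by decide) (by decide) (by decide)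
    · exact memStab ![6,10,11,7,2,1,9,8,3,0,5,4] ![9,5,4,8,11,10,0,3,7,6,1,2] (by decide) (by decide) (by decide) !![1,0,1;0,1,0;1,1,0] !![0,1,1;0,1,0;1,1,1] (by decide) (by decide) (by decide)
    · exact memStab ![7,2,3,8,11,6,0,4,9,10,1,5] ![6,10,1,2,7,11,5,0,3,8,9,4] (by decide) (by decide) (by decide) !![1,0,0;1,0,1;1,1,1] !![1,0,0;0,1,1;1,1,0] (by decide) (by decide) (by decide)
    · exact memStab ![7,2,6,11,8,3,1,10,9,4,0,5] ![10,6,1,5,9,11,2,0,4,8,7,3] (by decide) (by decide) (by decide) !![1,0,1;1,0,0;1,1,1] !![0,1,0;1,0,1;1,1,0] (by decide) (by decide) (by decide)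
    · exact memStab ![8,11,7,3,4,9,6,2,0,5,10,1] ![8,11,7,3,4,9,6,2,0,5,10,1] (by decide) (by decide) (by decide) !![0,1,1;1,0,1;0,0,1] !![0,1,1;1,0,1;0,0,1] (by decide) (by decide) (by decide)
    · exact memStab ![8,11,9,4,3,7,10,5,0,2,6,1] ![8,11,9,4,3,7,10,5,0,2,6,1] (by decide) (by decide) (by decide) !![0,1,0;1,0,0;0,0,1] !![0,1,0;1,0,0;0,0,1] (by decide) (by decide) (by decide)
    · exact memStab ![9,5,4,8,11,10,0,3,7,6,1,2] ![6,10,11,7,2,1,9,8,3,0,5,4] (by decide) (by decide) (by decide) !![0,1,1;0,1,0;1,1,1] !![1,0,1;0,1,0;1,1,0] (by decide) (by decide) (by decide)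
    · exact memStab ![9,5,10,11,8,4,1,6,7,3,0,2] ![10,6,11,9,5,1,7,8,4,0,2,3] (by decide) (by decide) (by decide) !![0,1,0;0,1,1;1,1,1] !![0,1,1;1,0,0;1,1,0] (by decide) (by decide) (by decide)
    · exact memStab ![10,6,1,5,9,11,2,0,4,8,7,3] ![7,2,6,11,8,3,1,10,9,4,0,5] (by decide) (by decide) (by decide) !![0,1,0;1,0,1;1,1,0] !![1,0,1;1,0,0;1,1,1] (by decide) (by decide) (by decide)
    · exact memStab ![10,6,11,9,5,1,7,8,4,0,2,3] ![9,5,10,11,8,4,1,6,7,3,0,2] (by decide) (by decide) (by decide) !![0,1,1;1,0,0;1,1,0] !![0,1,0;0,1,1;1,1,1] (by decide) (by decide) (by decide)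
    · exact memStab ![11,8,7,6,10,9,3,2,1,5,4,0] ![11,8,7,6,10,9,3,2,1,5,4,0] (by decide) (by decide) (by decide) !![1,0,1;0,1,1;0,0,1] !![1,0,1;0,1,1;0,0,1] (by decide) (by decide) (by decide)
    · exact memStab ![11,8,9,10,6,7,4,5,1,2,3,0] ![11,8,9,10,6,7,4,5,1,2,3,0] (by decide) (by decide) (by decide) !![1,0,0;0,1,0;0,0,1] !![1,0,0;0,1,0;0,0,1] (by decide) (by decide) (by decide)

lemma card_stab_l0 : Nat.card (DodecLabelingStabilizer l0) = 24 := by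
  have h0 : Nat.card (DodecLabelingStabilizer l0)
      = (DodecLabelingStabilizer l0).ncard := Nat.card_coe_set_eq _
  rw [h0, ← Set.ncard_image_of_injective (DodecLabelingStabilizer l0) Equiv.coe_fn_injective,
    stab_image]
  have h1 : {f | f ∈ goodPermL} = ((goodPermL.toFinset : Finset (Fin 12 → Fin 12)) : Set _) := by
    ext f; simp [List.mem_toFinset]
  rw [h1, Set.ncard_coe_finset, List.toFinset_card_of_nodup (by decide)]
  rfl

end DodecAux

/-- The maximum order of the stabilizer `A_λ` over all labelings `λ` of the
dodecahedron is exactly `24`: some labeling has stabilizer of order `24`, and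
every labeling has stabilizer of order at most `24`. -/
theorem dodec_labeling_max_stabilizer :
    (∃ l, IsDodecLabeling l ∧ Nat.card (DodecLabelingStabilizer l) = 24) ∧
      ∀ l, IsDodecLabeling l → Nat.card (DodecLabelingStabilizer l) ≤ 24 := by
  exact ⟨⟨l0, isDodecLabeling_l0, card_stab_l0⟩, stab_le⟩
end

section
/- Every labeling of the 120-cell takes at least 5 distinct values; i.e., if λ : Fin 120 → (ZMod 2)⁴ is a labeling of the 120-cell, then the image of λ has cardinality at least 5. -/
set_option maxHeartbeats 2000000 in
/-- The 600 vertex quadruples of the 120-cell, under a fixed identification of its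
120 dodecahedral facets with `Fin 120`: each of the 600 vertices of the 120-cell
lies on exactly 4 pairwise adjacent facets, listed here explicitly.  (This data was
computed from the standard metric realization: the facets of the 120-cell correspond
to the 120 vertices of the dual 600-cell, realized as the unit icosians in `ℝ⁴`,
two facets being adjacent when the inner product of the corresponding unit icosians
is `φ/2`; the vertex quadruples are the 4-cliques of this adjacency relation, i.e.
the 600 tetrahedral cells of the 600-cell.) -/
def cell120VertexQuadruples : List (Fin 120 × Fin 120 × Fin 120 × Fin 120) :=
  [(0, 21, 22, 29),
(0, 21, 22, 30),
(0, 21, 27, 28),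
(0, 21, 27, 30),
(0, 21, 28, 29),
(0, 22, 25, 26),
(0, 22, 25, 30),
(0, 22, 26, 29),
(0, 23, 26, 29),
(0, 23, 26, 32),
(0, 23, 28, 29),
(0, 23, 28, 31),
(0, 23, 31, 32),
(0, 24, 25, 30),
(0, 24, 25, 32),
(0, 24, 27, 30),
(0, 24, 27, 31),
(0, 24, 31, 32),
(0, 25, 26, 32),
(0, 27, 28, 31),
(1, 6, 22, 29),
(1, 6, 22, 77),
(1, 6, 29, 75),
(1, 6, 52, 75),
(1, 6, 52, 77),
(1, 11, 26, 29),
(1, 11, 26, 79),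
(1, 11, 29, 75),
(1, 11, 62, 75),
(1, 11, 62, 79),
(1, 13, 22, 26),
(1, 13, 22, 77),
(1, 13, 26, 79),
(1, 13, 47, 77),
(1, 13, 47, 79),
(1, 22, 26, 29),
(1, 47, 52, 62),
(1, 47, 52, 77),
(1, 47, 62, 79),
(1, 52, 62, 75),
(2, 5, 22, 30),
(2, 5, 22, 77),
(2, 5, 30, 76),
(2, 5, 53, 76),
(2, 5, 53, 77),
(2, 12, 25, 30),
(2, 12, 25, 80),
(2, 12, 30, 76),
(2, 12, 63, 76),
(2, 12, 63, 80),
(2, 13, 22, 25),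
(2, 13, 22, 77),
(2, 13, 25, 80),
(2, 13, 46, 77),
(2, 13, 46, 80),
(2, 22, 25, 30),
(2, 46, 53, 63),
(2, 46, 53, 77),
(2, 46, 63, 80),
(2, 53, 63, 76),
(3, 6, 21, 29),
(3, 6, 21, 78),
(3, 6, 29, 75),
(3, 6, 50, 75),
(3, 6, 50, 78),
(3, 9, 28, 29),
(3, 9, 28, 81),
(3, 9, 29, 75),
(3, 9, 64, 75),
(3, 9, 64, 81),
(3, 14, 21, 28),
(3, 14, 21, 78),
(3, 14, 28, 81),
(3, 14, 49, 78),
(3, 14, 49, 81),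
(3, 21, 28, 29),
(3, 49, 50, 64),
(3, 49, 50, 78),
(3, 49, 64, 81),
(3, 50, 64, 75),
(4, 5, 21, 30),
(4, 5, 21, 78),
(4, 5, 30, 76),
(4, 5, 51, 76),
(4, 5, 51, 78),
(4, 10, 27, 30),
(4, 10, 27, 82),
(4, 10, 30, 76),
(4, 10, 65, 76),
(4, 10, 65, 82),
(4, 14, 21, 27),
(4, 14, 21, 78),
(4, 14, 27, 82),
(4, 14, 48, 78),
(4, 14, 48, 82),
(4, 21, 27, 30),
(4, 48, 51, 65),
(4, 48, 51, 78),
(4, 48, 65, 82),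
(4, 51, 65, 76),
(5, 6, 21, 22),
(5, 6, 21, 78),
(5, 6, 22, 77),
(5, 6, 45, 77),
(5, 6, 45, 78),
(5, 21, 22, 30),
(5, 45, 51, 53),
(5, 45, 51, 78),
(5, 45, 53, 77),
(5, 51, 53, 76),
(6, 21, 22, 29),
(6, 45, 50, 52),
(6, 45, 50, 78),
(6, 45, 52, 77),
(6, 50, 52, 75),
(7, 13, 25, 26),
(7, 13, 25, 80),
(7, 13, 26, 79),
(7, 13, 58, 79),
(7, 13, 58, 80),
(7, 17, 26, 32),
(7, 17, 26, 79),
(7, 17, 32, 83),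
(7, 17, 71, 79),
(7, 17, 71, 83),
(7, 18, 25, 32),
(7, 18, 25, 80),
(7, 18, 32, 83),
(7, 18, 70, 80),
(7, 18, 70, 83),
(7, 25, 26, 32),
(7, 58, 70, 71),
(7, 58, 70, 80),
(7, 58, 71, 79),
(7, 70, 71, 83),
(8, 14, 27, 28),
(8, 14, 27, 82),
(8, 14, 28, 81),
(8, 14, 61, 81),
(8, 14, 61, 82),
(8, 19, 28, 31),
(8, 19, 28, 81),
(8, 19, 31, 84),
(8, 19, 73, 81),
(8, 19, 73, 84),
(8, 20, 27, 31),
(8, 20, 27, 82),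
(8, 20, 31, 84),
(8, 20, 72, 82),
(8, 20, 72, 84),
(8, 27, 28, 31),
(8, 61, 72, 73),
(8, 61, 72, 82),
(8, 61, 73, 81),
(8, 72, 73, 84),
(9, 11, 23, 29),
(9, 11, 23, 85),
(9, 11, 29, 75),
(9, 11, 59, 75),
(9, 11, 59, 85),
(9, 19, 23, 28),
(9, 19, 23, 85),
(9, 19, 28, 81),
(9, 19, 56, 81),
(9, 19, 56, 85),
(9, 23, 28, 29),
(9, 56, 59, 64),
(9, 56, 59, 85),
(9, 56, 64, 81),
(9, 59, 64, 75),
(10, 12, 24, 30),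
(10, 12, 24, 86),
(10, 12, 30, 76),
(10, 12, 60, 76),
(10, 12, 60, 86),
(10, 20, 24, 27),
(10, 20, 24, 86),
(10, 20, 27, 82),
(10, 20, 57, 82),
(10, 20, 57, 86),
(10, 24, 27, 30),
(10, 57, 60, 65),
(10, 57, 60, 86),
(10, 57, 65, 82),
(10, 60, 65, 76),
(11, 17, 23, 26),
(11, 17, 23, 85),
(11, 17, 26, 79),
(11, 17, 54, 79),
(11, 17, 54, 85),
(11, 23, 26, 29),
(11, 54, 59, 62),
(11, 54, 59, 85),
(11, 54, 62, 79),
(11, 59, 62, 75),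
(12, 18, 24, 25),
(12, 18, 24, 86),
(12, 18, 25, 80),
(12, 18, 55, 80),
(12, 18, 55, 86),
(12, 24, 25, 30),
(12, 55, 60, 63),
(12, 55, 60, 86),
(12, 55, 63, 80),
(12, 60, 63, 76),
(13, 22, 25, 26),
(13, 46, 47, 58),
(13, 46, 47, 77),
(13, 46, 58, 80),
(13, 47, 58, 79),
(14, 21, 27, 28),
(14, 48, 49, 61),
(14, 48, 49, 78),
(14, 48, 61, 82),
(14, 49, 61, 81),
(15, 16, 31, 32),
(15, 16, 31, 84),
(15, 16, 32, 83),
(15, 16, 74, 83),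
(15, 16, 74, 84),
(15, 18, 24, 32),
(15, 18, 24, 86),
(15, 18, 32, 83),
(15, 18, 69, 83),
(15, 18, 69, 86),
(15, 20, 24, 31),
(15, 20, 24, 86),
(15, 20, 31, 84),
(15, 20, 67, 84),
(15, 20, 67, 86),
(15, 24, 31, 32),
(15, 67, 69, 74),
(15, 67, 69, 86),
(15, 67, 74, 84),
(15, 69, 74, 83),
(16, 17, 23, 32),
(16, 17, 23, 85),
(16, 17, 32, 83),
(16, 17, 68, 83),
(16, 17, 68, 85),
(16, 19, 23, 31),
(16, 19, 23, 85),
(16, 19, 31, 84),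
(16, 19, 66, 84),
(16, 19, 66, 85),
(16, 23, 31, 32),
(16, 66, 68, 74),
(16, 66, 68, 85),
(16, 66, 74, 84),
(16, 68, 74, 83),
(17, 23, 26, 32),
(17, 54, 68, 71),
(17, 54, 68, 85),
(17, 54, 71, 79),
(17, 68, 71, 83),
(18, 24, 25, 32),
(18, 55, 69, 70),
(18, 55, 69, 86),
(18, 55, 70, 80),
(18, 69, 70, 83),
(19, 23, 28, 31),
(19, 56, 66, 73),
(19, 56, 66, 85),
(19, 56, 73, 81),
(19, 66, 73, 84),
(20, 24, 27, 31),
(20, 57, 67, 72),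
(20, 57, 67, 86),
(20, 57, 72, 82),
(20, 67, 72, 84),
(33, 50, 52, 75),
(33, 50, 52, 104),
(33, 50, 64, 75),
(33, 50, 64, 101),
(33, 50, 101, 104),
(33, 52, 62, 75),
(33, 52, 62, 99),
(33, 52, 99, 104),
(33, 59, 62, 75),
(33, 59, 62, 109),
(33, 59, 64, 75),
(33, 59, 64, 107),
(33, 59, 107, 109),
(33, 62, 99, 109),
(33, 64, 101, 107),
(33, 95, 99, 104),
(33, 95, 99, 109),
(33, 95, 101, 104),
(33, 95, 101, 107),
(33, 95, 107, 109),
(34, 51, 53, 76),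
(34, 51, 53, 103),
(34, 51, 65, 76),
(34, 51, 65, 102),
(34, 51, 102, 103),
(34, 53, 63, 76),
(34, 53, 63, 100),
(34, 53, 100, 103),
(34, 60, 63, 76),
(34, 60, 63, 110),
(34, 60, 65, 76),
(34, 60, 65, 108),
(34, 60, 108, 110),
(34, 63, 100, 110),
(34, 65, 102, 108),
(34, 96, 100, 103),
(34, 96, 100, 110),
(34, 96, 102, 103),
(34, 96, 102, 108),
(34, 96, 108, 110),
(35, 45, 52, 77),
(35, 45, 52, 104),
(35, 45, 53, 77),
(35, 45, 53, 103),
(35, 45, 103, 104),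
(35, 46, 47, 77),
(35, 46, 47, 111),
(35, 46, 53, 77),
(35, 46, 53, 100),
(35, 46, 100, 111),
(35, 47, 52, 77),
(35, 47, 52, 99),
(35, 47, 99, 111),
(35, 52, 99, 104),
(35, 53, 100, 103),
(35, 88, 99, 104),
(35, 88, 99, 111),
(35, 88, 100, 103),
(35, 88, 100, 111),
(35, 88, 103, 104),
(36, 45, 50, 78),
(36, 45, 50, 104),
(36, 45, 51, 78),
(36, 45, 51, 103),
(36, 45, 103, 104),
(36, 48, 49, 78),
(36, 48, 49, 112),
(36, 48, 51, 78),
(36, 48, 51, 102),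
(36, 48, 102, 112),
(36, 49, 50, 78),
(36, 49, 50, 101),
(36, 49, 101, 112),
(36, 50, 101, 104),
(36, 51, 102, 103),
(36, 87, 101, 104),
(36, 87, 101, 112),
(36, 87, 102, 103),
(36, 87, 102, 112),
(36, 87, 103, 104),
(37, 47, 58, 79),
(37, 47, 58, 111),
(37, 47, 62, 79),
(37, 47, 62, 99),
(37, 47, 99, 111),
(37, 54, 62, 79),
(37, 54, 62, 109),
(37, 54, 71, 79),
(37, 54, 71, 115),
(37, 54, 109, 115),
(37, 58, 71, 79),
(37, 58, 71, 105),
(37, 58, 105, 111),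
(37, 62, 99, 109),
(37, 71, 105, 115),
(37, 92, 99, 109),
(37, 92, 99, 111),
(37, 92, 105, 111),
(37, 92, 105, 115),
(37, 92, 109, 115),
(38, 46, 58, 80),
(38, 46, 58, 111),
(38, 46, 63, 80),
(38, 46, 63, 100),
(38, 46, 100, 111),
(38, 55, 63, 80),
(38, 55, 63, 110),
(38, 55, 70, 80),
(38, 55, 70, 116),
(38, 55, 110, 116),
(38, 58, 70, 80),
(38, 58, 70, 105),
(38, 58, 105, 111),
(38, 63, 100, 110),
(38, 70, 105, 116),
(38, 91, 100, 110),
(38, 91, 100, 111),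
(38, 91, 105, 111),
(38, 91, 105, 116),
(38, 91, 110, 116),
(39, 49, 61, 81),
(39, 49, 61, 112),
(39, 49, 64, 81),
(39, 49, 64, 101),
(39, 49, 101, 112),
(39, 56, 64, 81),
(39, 56, 64, 107),
(39, 56, 73, 81),
(39, 56, 73, 117),
(39, 56, 107, 117),
(39, 61, 73, 81),
(39, 61, 73, 106),
(39, 61, 106, 112),
(39, 64, 101, 107),
(39, 73, 106, 117),
(39, 94, 101, 107),
(39, 94, 101, 112),
(39, 94, 106, 112),
(39, 94, 106, 117),
(39, 94, 107, 117),
(40, 48, 61, 82),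
(40, 48, 61, 112),
(40, 48, 65, 82),
(40, 48, 65, 102),
(40, 48, 102, 112),
(40, 57, 65, 82),
(40, 57, 65, 108),
(40, 57, 72, 82),
(40, 57, 72, 118),
(40, 57, 108, 118),
(40, 61, 72, 82),
(40, 61, 72, 106),
(40, 61, 106, 112),
(40, 65, 102, 108),
(40, 72, 106, 118),
(40, 93, 102, 108),
(40, 93, 102, 112),
(40, 93, 106, 112),
(40, 93, 106, 118),
(40, 93, 108, 118),
(41, 68, 71, 83),
(41, 68, 71, 115),
(41, 68, 74, 83),
(41, 68, 74, 114),
(41, 68, 114, 115),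
(41, 69, 70, 83),
(41, 69, 70, 116),
(41, 69, 74, 83),
(41, 69, 74, 113),
(41, 69, 113, 116),
(41, 70, 71, 83),
(41, 70, 71, 105),
(41, 70, 105, 116),
(41, 71, 105, 115),
(41, 74, 113, 114),
(41, 98, 105, 115),
(41, 98, 105, 116),
(41, 98, 113, 114),
(41, 98, 113, 116),
(41, 98, 114, 115),
(42, 66, 73, 84),
(42, 66, 73, 117),
(42, 66, 74, 84),
(42, 66, 74, 114),
(42, 66, 114, 117),
(42, 67, 72, 84),
(42, 67, 72, 118),
(42, 67, 74, 84),
(42, 67, 74, 113),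
(42, 67, 113, 118),
(42, 72, 73, 84),
(42, 72, 73, 106),
(42, 72, 106, 118),
(42, 73, 106, 117),
(42, 74, 113, 114),
(42, 97, 106, 117),
(42, 97, 106, 118),
(42, 97, 113, 114),
(42, 97, 113, 118),
(42, 97, 114, 117),
(43, 54, 59, 85),
(43, 54, 59, 109),
(43, 54, 68, 85),
(43, 54, 68, 115),
(43, 54, 109, 115),
(43, 56, 59, 85),
(43, 56, 59, 107),
(43, 56, 66, 85),
(43, 56, 66, 117),
(43, 56, 107, 117),
(43, 59, 107, 109),
(43, 66, 68, 85),
(43, 66, 68, 114),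
(43, 66, 114, 117),
(43, 68, 114, 115),
(43, 89, 107, 109),
(43, 89, 107, 117),
(43, 89, 109, 115),
(43, 89, 114, 115),
(43, 89, 114, 117),
(44, 55, 60, 86),
(44, 55, 60, 110),
(44, 55, 69, 86),
(44, 55, 69, 116),
(44, 55, 110, 116),
(44, 57, 60, 86),
(44, 57, 60, 108),
(44, 57, 67, 86),
(44, 57, 67, 118),
(44, 57, 108, 118),
(44, 60, 108, 110),
(44, 67, 69, 86),
(44, 67, 69, 113),
(44, 67, 113, 118),
(44, 69, 113, 116),
(44, 90, 108, 110),
(44, 90, 108, 118),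
(44, 90, 110, 116),
(44, 90, 113, 116),
(44, 90, 113, 118),
(45, 50, 52, 104),
(45, 51, 53, 103),
(46, 47, 58, 111),
(46, 53, 63, 100),
(47, 52, 62, 99),
(48, 49, 61, 112),
(48, 51, 65, 102),
(49, 50, 64, 101),
(54, 59, 62, 109),
(54, 68, 71, 115),
(55, 60, 63, 110),
(55, 69, 70, 116),
(56, 59, 64, 107),
(56, 66, 73, 117),
(57, 60, 65, 108),
(57, 67, 72, 118),
(58, 70, 71, 105),
(61, 72, 73, 106),
(66, 68, 74, 114),
(67, 69, 74, 113),
(87, 88, 95, 104),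
(87, 88, 95, 119),
(87, 88, 96, 103),
(87, 88, 96, 119),
(87, 88, 103, 104),
(87, 93, 94, 112),
(87, 93, 94, 119),
(87, 93, 96, 102),
(87, 93, 96, 119),
(87, 93, 102, 112),
(87, 94, 95, 101),
(87, 94, 95, 119),
(87, 94, 101, 112),
(87, 95, 101, 104),
(87, 96, 102, 103),
(88, 91, 92, 111),
(88, 91, 92, 119),
(88, 91, 96, 100),
(88, 91, 96, 119),
(88, 91, 100, 111),
(88, 92, 95, 99),
(88, 92, 95, 119),
(88, 92, 99, 111),
(88, 95, 99, 104),
(88, 96, 100, 103),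
(89, 92, 95, 109),
(89, 92, 95, 119),
(89, 92, 98, 115),
(89, 92, 98, 119),
(89, 92, 109, 115),
(89, 94, 95, 107),
(89, 94, 95, 119),
(89, 94, 97, 117),
(89, 94, 97, 119),
(89, 94, 107, 117),
(89, 95, 107, 109),
(89, 97, 98, 114),
(89, 97, 98, 119),
(89, 97, 114, 117),
(89, 98, 114, 115),
(90, 91, 96, 110),
(90, 91, 96, 119),
(90, 91, 98, 116),
(90, 91, 98, 119),
(90, 91, 110, 116),
(90, 93, 96, 108),
(90, 93, 96, 119),
(90, 93, 97, 118),
(90, 93, 97, 119),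
(90, 93, 108, 118),
(90, 96, 108, 110),
(90, 97, 98, 113),
(90, 97, 98, 119),
(90, 97, 113, 118),
(90, 98, 113, 116),
(91, 92, 98, 105),
(91, 92, 98, 119),
(91, 92, 105, 111),
(91, 96, 100, 110),
(91, 98, 105, 116),
(92, 95, 99, 109),
(92, 98, 105, 115),
(93, 94, 97, 106),
(93, 94, 97, 119),
(93, 94, 106, 112),
(93, 96, 102, 108),
(93, 97, 106, 118),
(94, 95, 101, 107),
(94, 97, 106, 117),
(97, 98, 113, 114)]

/-- A family of four vectors forms a basis of `(ZMod 2)⁴` iff it is linearly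
independent and spans. -/
def IsBasisFam4 (v : Fin 4 → (Fin 4 → ZMod 2)) : Prop :=
  LinearIndependent (ZMod 2) v ∧ Submodule.span (ZMod 2) (Set.range v) = ⊤

/-- A labeling of the 120-cell: an assignment of a vector in `(ZMod 2)⁴` to each of
the 120 facets such that the labels of any four facets meeting at a vertex form a
basis of `(ZMod 2)⁴`. -/
def IsCell120Labeling (l : Fin 120 → (Fin 4 → ZMod 2)) : Prop :=
  ∀ q ∈ cell120VertexQuadruples, IsBasisFam4 ![l q.1, l q.2.1, l q.2.2.1, l q.2.2.2]

/-- The four vectors of a basis family are pairwise distinct. -/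
lemma isBasisFam4_pairwise_ne {a b c d : Fin 4 → ZMod 2}
    (h : IsBasisFam4 ![a, b, c, d]) :
    a ≠ b ∧ a ≠ c ∧ a ≠ d ∧ b ≠ c ∧ b ≠ d ∧ c ≠ d := by
  have inj := h.1.injective
  refine ⟨?_, ?_, ?_, ?_, ?_, ?_⟩ <;> intro he
  · exact absurd (inj (show (![a,b,c,d] : Fin 4 → _) 0 = ![a,b,c,d] 1 by simpa using he))
      (by decide)
  · exact absurd (inj (show (![a,b,c,d] : Fin 4 → _) 0 = ![a,b,c,d] 2 by simpa using he))
      (by decide)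
  · exact absurd (inj (show (![a,b,c,d] : Fin 4 → _) 0 = ![a,b,c,d] 3 by simpa using he))
      (by decide)
  · exact absurd (inj (show (![a,b,c,d] : Fin 4 → _) 1 = ![a,b,c,d] 2 by simpa using he))
      (by decide)
  · exact absurd (inj (show (![a,b,c,d] : Fin 4 → _) 1 = ![a,b,c,d] 3 by simpa using he))
      (by decide)
  · exact absurd (inj (show (![a,b,c,d] : Fin 4 → _) 2 = ![a,b,c,d] 3 by simpa using he))
      (by decide)

/-- In a set of at most two elements, any element distinct from `y` equals `x`
whenever `x ≠ y`. -/
lemma eq_of_mem_two {α : Type*} {T : Set α} (hT : T.Finite) (h2 : T.ncard ≤ 2)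
    {x y z : α} (hx : x ∈ T) (hy : y ∈ T) (hz : z ∈ T)
    (hxy : x ≠ y) (hzy : z ≠ y) : z = x := by
  by_contra hzx
  have hsub : ({x, y, z} : Set α) ⊆ T := by
    intro a ha
    rcases ha with rfl | rfl | rfl <;> assumption
  have h3 : ({x, y, z} : Set α).ncard = 3 :=
    Set.ncard_eq_three.mpr ⟨x, y, z, hxy, Ne.symm hzx, Ne.symm hzy, rfl⟩
  have hle : ({x, y, z} : Set α).ncard ≤ T.ncard := Set.ncard_le_ncard hsub hT
  omega

/-- Every labeling of the 120-cell takes at least 5 distinct values. -/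
theorem cell120_labeling_five_values (l : Fin 120 → (Fin 4 → ZMod 2))
    (hl : IsCell120Labeling l) : 5 ≤ (Set.range l).ncard := by
  by_contra hcon
  push_neg at hcon
  -- the five vertex quadruples containing both facets 0 and 21
  have h1 := isBasisFam4_pairwise_ne (hl (0, 21, 22, 29) (by decide))
  have h2 := isBasisFam4_pairwise_ne (hl (0, 21, 22, 30) (by decide))
  have h3 := isBasisFam4_pairwise_ne (hl (0, 21, 27, 28) (by decide))
  have h4 := isBasisFam4_pairwise_ne (hl (0, 21, 27, 30) (by decide))
  have h5 := isBasisFam4_pairwise_ne (hl (0, 21, 28, 29) (by decide))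
  have hfin : (Set.range l).Finite := Set.finite_range l
  -- the set of values other than `l 0` and `l 21` has at most 2 elements
  set T : Set (Fin 4 → ZMod 2) := Set.range l \ {l 0, l 21} with hTdef
  have hTfin : T.Finite := hfin.diff
  have hsub : ({l 0, l 21} : Set (Fin 4 → ZMod 2)) ⊆ Set.range l := by
    intro a ha
    rcases ha with rfl | rfl <;> exact Set.mem_range_self _
  have hpair : ({l 0, l 21} : Set (Fin 4 → ZMod 2)).ncard = 2 :=
    Set.ncard_pair h1.1
  have hT2 : T.ncard ≤ 2 := by
    have := Set.ncard_diff hsub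
    rw [hpair, ← hTdef] at this
    omega
  -- membership of the five cycle values in T
  have m22 : l 22 ∈ T := ⟨Set.mem_range_self _, by
    simp only [Set.mem_insert_iff, Set.mem_singleton_iff]
    push_neg
    exact ⟨Ne.symm h1.2.1, Ne.symm h1.2.2.2.1⟩⟩
  have m29 : l 29 ∈ T := ⟨Set.mem_range_self _, by
    simp only [Set.mem_insert_iff, Set.mem_singleton_iff]
    push_neg
    exact ⟨Ne.symm h1.2.2.1, Ne.symm h1.2.2.2.2.1⟩⟩
  have m30 : l 30 ∈ T := ⟨Set.mem_range_self _, by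
    simp only [Set.mem_insert_iff, Set.mem_singleton_iff]
    push_neg
    exact ⟨Ne.symm h2.2.2.1, Ne.symm h2.2.2.2.2.1⟩⟩
  have m27 : l 27 ∈ T := ⟨Set.mem_range_self _, by
    simp only [Set.mem_insert_iff, Set.mem_singleton_iff]
    push_neg
    exact ⟨Ne.symm h3.2.1, Ne.symm h3.2.2.2.1⟩⟩
  have m28 : l 28 ∈ T := ⟨Set.mem_range_self _, by
    simp only [Set.mem_insert_iff, Set.mem_singleton_iff]
    push_neg
    exact ⟨Ne.symm h3.2.2.1, Ne.symm h3.2.2.2.2.1⟩⟩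
  -- the 5-cycle 22 - 29 - 28 - 27 - 30 - 22 cannot be 2-colored
  have e2229 : l 22 ≠ l 29 := h1.2.2.2.2.2
  have e2230 : l 22 ≠ l 30 := h2.2.2.2.2.2
  have e2728 : l 27 ≠ l 28 := h3.2.2.2.2.2
  have e2730 : l 27 ≠ l 30 := h4.2.2.2.2.2
  have e2829 : l 28 ≠ l 29 := h5.2.2.2.2.2
  have h28 : l 28 = l 22 := eq_of_mem_two hTfin hT2 m22 m29 m28 e2229 e2829
  have h27 : l 27 = l 29 := eq_of_mem_two hTfin hT2 m29 m22 m27 (Ne.symm e2229)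
    (h28 ▸ e2728)
  have h30 : l 30 = l 22 := eq_of_mem_two hTfin hT2 m22 m29 m30 e2229
    (fun h => e2730 (h27.trans h.symm))
  exact e2230 h30.symm
end

section
/- If a labeling λ of the 120-cell takes exactly 5 distinct values, then there exists g ∈ GL₄(𝔽₂) such that the image of g ∘ λ is exactly {e₁, e₂, e₃, e₄, e₁+e₂+e₃+e₄}, where e₁, …, e₄ are the standard basis vectors of (ZMod 2)⁴. -/
section Cell120Aux

/-- Encode a vector of `(ZMod 2)⁴` as a bitmask. -/
def encV (v : Fin 4 → ZMod 2) : ℕ :=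
  (v 0).val + 2 * (v 1).val + 4 * (v 2).val + 8 * (v 3).val

/-- Linear independence of four bitmask-encoded vectors over `𝔽₂`. -/
def indepN (a b c d : ℕ) : Prop :=
  a ≠ 0 ∧ b ≠ 0 ∧ c ≠ 0 ∧ d ≠ 0 ∧
  a ^^^ b ≠ 0 ∧ a ^^^ c ≠ 0 ∧ a ^^^ d ≠ 0 ∧ b ^^^ c ≠ 0 ∧ b ^^^ d ≠ 0 ∧ c ^^^ d ≠ 0 ∧
  a ^^^ b ^^^ c ≠ 0 ∧ a ^^^ b ^^^ d ≠ 0 ∧ a ^^^ c ^^^ d ≠ 0 ∧ b ^^^ c ^^^ d ≠ 0 ∧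
  a ^^^ b ^^^ c ^^^ d ≠ 0

instance (a b c d : ℕ) : Decidable (indepN a b c d) := by unfold indepN; infer_instance

/-- Candidate encoded values: the four standard basis vectors and the fifth value. -/
def NCf (w : ℕ) : Fin 5 → ℕ := ![1, 2, 4, 8, w]

theorem encV_add : ∀ x y : Fin 4 → ZMod 2, encV (x + y) = encV x ^^^ encV y := by decide
theorem encV_eq_zero : ∀ x : Fin 4 → ZMod 2, encV x = 0 → x = 0 := by decide
theorem encV_inj : ∀ x y : Fin 4 → ZMod 2, encV x = encV y → x = y := by decide
theorem encV_lt : ∀ x : Fin 4 → ZMod 2, encV x < 16 := by decide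
theorem encV15 : ∀ x : Fin 4 → ZMod 2, encV x = 15 → x = ![1,1,1,1] := by decide
theorem encV14 : ∀ x : Fin 4 → ZMod 2, encV x = 14 → x = ![0,1,1,1] := by decide
theorem encE1 : encV ![1,0,0,0] = 1 := by decide
theorem encE2 : encV ![0,1,0,0] = 2 := by decide
theorem encE3 : encV ![0,0,1,0] = 4 := by decide
theorem encE4 : encV ![0,0,0,1] = 8 := by decide

theorem bridge {a b c d : Fin 4 → ZMod 2} (h : IsBasisFam4 ![a, b, c, d]) :
    indepN (encV a) (encV b) (encV c) (encV d) := by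
  have H : ∀ g0 g1 g2 g3 : ZMod 2, ¬(g0 = 0 ∧ g1 = 0 ∧ g2 = 0 ∧ g3 = 0) →
      ¬(g0 • a + g1 • b + g2 • c + g3 • d = 0) := by
    intro g0 g1 g2 g3 hg hsum
    apply hg
    have hz := fun i => Fintype.linearIndependent_iff.mp h.1 ![g0, g1, g2, g3]
      (by rw [Fin.sum_univ_four]; exact hsum) i
    exact ⟨hz 0, hz 1, hz 2, hz 3⟩
  refine ⟨?_, ?_, ?_, ?_, ?_, ?_, ?_, ?_, ?_, ?_, ?_, ?_, ?_, ?_, ?_⟩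
  · intro he
    exact H 1 0 0 0 (by decide) (by simpa using encV_eq_zero _ he)
  · intro he
    exact H 0 1 0 0 (by decide) (by simpa using encV_eq_zero _ he)
  · intro he
    exact H 0 0 1 0 (by decide) (by simpa using encV_eq_zero _ he)
  · intro he
    exact H 0 0 0 1 (by decide) (by simpa using encV_eq_zero _ he)
  · intro he
    rw [← encV_add] at he; exact H 1 1 0 0 (by decide) (by simpa using encV_eq_zero _ he)
  · intro he
    rw [← encV_add] at he; exact H 1 0 1 0 (by decide) (by simpa using encV_eq_zero _ he)
  · intro he
    rw [← encV_add] at he; exact H 1 0 0 1 (by decide) (by simpa using encV_eq_zero _ he)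
  · intro he
    rw [← encV_add] at he; exact H 0 1 1 0 (by decide) (by simpa using encV_eq_zero _ he)
  · intro he
    rw [← encV_add] at he; exact H 0 1 0 1 (by decide) (by simpa using encV_eq_zero _ he)
  · intro he
    rw [← encV_add] at he; exact H 0 0 1 1 (by decide) (by simpa using encV_eq_zero _ he)
  · intro he
    rw [← encV_add, ← encV_add] at he; exact H 1 1 1 0 (by decide) (by simpa using encV_eq_zero _ he)
  · intro he
    rw [← encV_add, ← encV_add] at he; exact H 1 1 0 1 (by decide) (by simpa using encV_eq_zero _ he)
  · intro he
    rw [← encV_add, ← encV_add] at he; exact H 1 0 1 1 (by decide) (by simpa using encV_eq_zero _ he)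
  · intro he
    rw [← encV_add, ← encV_add] at he; exact H 0 1 1 1 (by decide) (by simpa using encV_eq_zero _ he)
  · intro he
    rw [← encV_add, ← encV_add, ← encV_add] at he; exact H 1 1 1 1 (by decide) (by simpa using encV_eq_zero _ he)

theorem labeling_comp (l : Fin 120 → (Fin 4 → ZMod 2))
    (e : (Fin 4 → ZMod 2) ≃ₗ[ZMod 2] (Fin 4 → ZMod 2)) (h : IsCell120Labeling l) :
    IsCell120Labeling (⇑e ∘ l) := by
  intro q hq
  obtain ⟨h1, h2⟩ := h q hq
  have hfam : ![(⇑e ∘ l) q.1, (⇑e ∘ l) q.2.1, (⇑e ∘ l) q.2.2.1, (⇑e ∘ l) q.2.2.2]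
      = ⇑e ∘ ![l q.1, l q.2.1, l q.2.2.1, l q.2.2.2] := by
    funext i; fin_cases i <;> rfl
  constructor
  · rw [hfam]
    exact h1.map' e.toLinearMap (LinearEquiv.ker e)
  · rw [hfam, Set.range_comp, ← LinearEquiv.coe_coe, ← Submodule.map_span, h2,
      Submodule.map_top, LinearEquiv.range]

set_option maxHeartbeats 4000000 in
theorem lemNo : ∀ wn : Fin 16,
    ∀ i30 : Fin 5, NCf (↑wn) i30 ≠ (wn:ℕ) →
    indepN 1 2 4 (NCf (↑wn) i30) →
    ∀ i27 : Fin 5, NCf (↑wn) i27 ≠ (wn:ℕ) →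
    ∀ i28 : Fin 5, NCf (↑wn) i28 ≠ (wn:ℕ) →
    indepN 1 2 (NCf (↑wn) i27) (NCf (↑wn) i28) →
    indepN 1 2 (NCf (↑wn) i27) (NCf (↑wn) i30) →
    indepN 1 2 (NCf (↑wn) i28) 8 →
    False := by decide
set_option maxHeartbeats 4000000 in
theorem lemA23 : ∀ wn : Fin 16, (wn:ℕ) ≠ 15 → (wn:ℕ) ≠ 14 →
    ∀ i26 : Fin 5, indepN 1 (↑wn) (NCf (↑wn) i26) 8 →
    ∀ i32 : Fin 5, indepN 1 (↑wn) (NCf (↑wn) i26) (NCf (↑wn) i32) →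
    ∀ i28 : Fin 5, indepN 1 (↑wn) (NCf (↑wn) i28) 8 →
    ∀ i31 : Fin 5, indepN 1 (↑wn) (NCf (↑wn) i28) (NCf (↑wn) i31) →
    indepN 1 (↑wn) (NCf (↑wn) i31) (NCf (↑wn) i32) →
    False := by decide
set_option maxHeartbeats 4000000 in
theorem lemA24 : ∀ wn : Fin 16, (wn:ℕ) ≠ 15 → (wn:ℕ) ≠ 14 →
    ∀ i25 i30 : Fin 5, indepN 1 (↑wn) (NCf (↑wn) i25) (NCf (↑wn) i30) →
    ∀ i32 : Fin 5, indepN 1 (↑wn) (NCf (↑wn) i25) (NCf (↑wn) i32) →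
    ∀ i27 : Fin 5, indepN 1 (↑wn) (NCf (↑wn) i27) (NCf (↑wn) i30) →
    ∀ i31 : Fin 5, indepN 1 (↑wn) (NCf (↑wn) i27) (NCf (↑wn) i31) →
    indepN 1 (↑wn) (NCf (↑wn) i31) (NCf (↑wn) i32) →
    False := by decide
set_option maxHeartbeats 4000000 in
theorem lemA25 : ∀ wn : Fin 16, (wn:ℕ) ≠ 15 → (wn:ℕ) ≠ 14 →
    ∀ i26 : Fin 5, indepN 1 4 (↑wn) (NCf (↑wn) i26) →
    ∀ i30 : Fin 5, indepN 1 4 (↑wn) (NCf (↑wn) i30) →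
    ∀ i24 : Fin 5, indepN 1 (NCf (↑wn) i24) (↑wn) (NCf (↑wn) i30) →
    ∀ i32 : Fin 5, indepN 1 (NCf (↑wn) i24) (↑wn) (NCf (↑wn) i32) →
    indepN 1 (↑wn) (NCf (↑wn) i26) (NCf (↑wn) i32) →
    False := by decide
set_option maxHeartbeats 4000000 in
theorem lemA26 : ∀ wn : Fin 16, (wn:ℕ) ≠ 15 → (wn:ℕ) ≠ 14 →
    indepN 1 4 (↑wn) 8 →
    ∀ i25 : Fin 5, indepN 1 4 (NCf (↑wn) i25) (↑wn) →
    ∀ i23 : Fin 5, indepN 1 (NCf (↑wn) i23) (↑wn) 8 →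
    ∀ i32 : Fin 5, indepN 1 (NCf (↑wn) i23) (↑wn) (NCf (↑wn) i32) →
    indepN 1 (NCf (↑wn) i25) (↑wn) (NCf (↑wn) i32) →
    False := by decide
set_option maxHeartbeats 4000000 in
theorem lemA27 : ∀ wn : Fin 16, (wn:ℕ) ≠ 15 → (wn:ℕ) ≠ 14 →
    ∀ i28 : Fin 5, indepN 1 2 (↑wn) (NCf (↑wn) i28) →
    ∀ i30 : Fin 5, indepN 1 2 (↑wn) (NCf (↑wn) i30) →
    ∀ i24 : Fin 5, indepN 1 (NCf (↑wn) i24) (↑wn) (NCf (↑wn) i30) →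
    ∀ i31 : Fin 5, indepN 1 (NCf (↑wn) i24) (↑wn) (NCf (↑wn) i31) →
    indepN 1 (↑wn) (NCf (↑wn) i28) (NCf (↑wn) i31) →
    False := by decide
set_option maxHeartbeats 4000000 in
theorem lemA28 : ∀ wn : Fin 16, (wn:ℕ) ≠ 15 → (wn:ℕ) ≠ 14 →
    indepN 1 2 (↑wn) 8 →
    ∀ i27 : Fin 5, indepN 1 2 (NCf (↑wn) i27) (↑wn) →
    ∀ i23 : Fin 5, indepN 1 (NCf (↑wn) i23) (↑wn) 8 →
    ∀ i31 : Fin 5, indepN 1 (NCf (↑wn) i23) (↑wn) (NCf (↑wn) i31) →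
    indepN 1 (NCf (↑wn) i27) (↑wn) (NCf (↑wn) i31) →
    False := by decide
set_option maxHeartbeats 4000000 in
theorem lemA30 : ∀ wn : Fin 16, (wn:ℕ) ≠ 15 → (wn:ℕ) ≠ 14 →
    indepN 1 2 4 (↑wn) →
    ∀ i27 : Fin 5, indepN 1 2 (NCf (↑wn) i27) (↑wn) →
    ∀ i25 : Fin 5, indepN 1 4 (NCf (↑wn) i25) (↑wn) →
    ∀ i24 : Fin 5, indepN 1 (NCf (↑wn) i24) (NCf (↑wn) i25) (↑wn) →
    indepN 1 (NCf (↑wn) i24) (NCf (↑wn) i27) (↑wn) →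
    False := by decide
set_option maxHeartbeats 4000000 in
theorem lemA31 : ∀ wn : Fin 16, (wn:ℕ) ≠ 15 → (wn:ℕ) ≠ 14 →
    ∀ i23 i28 : Fin 5, indepN 1 (NCf (↑wn) i23) (NCf (↑wn) i28) (↑wn) →
    ∀ i32 : Fin 5, indepN 1 (NCf (↑wn) i23) (↑wn) (NCf (↑wn) i32) →
    ∀ i24 : Fin 5, indepN 1 (NCf (↑wn) i24) (↑wn) (NCf (↑wn) i32) →
    ∀ i27 : Fin 5, indepN 1 (NCf (↑wn) i24) (NCf (↑wn) i27) (↑wn) →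
    indepN 1 (NCf (↑wn) i27) (NCf (↑wn) i28) (↑wn) →
    False := by decide
set_option maxHeartbeats 4000000 in
theorem lemA32 : ∀ wn : Fin 16, (wn:ℕ) ≠ 15 → (wn:ℕ) ≠ 14 →
    ∀ i23 i26 : Fin 5, indepN 1 (NCf (↑wn) i23) (NCf (↑wn) i26) (↑wn) →
    ∀ i31 : Fin 5, indepN 1 (NCf (↑wn) i23) (NCf (↑wn) i31) (↑wn) →
    ∀ i24 : Fin 5, indepN 1 (NCf (↑wn) i24) (NCf (↑wn) i31) (↑wn) →
    ∀ i25 : Fin 5, indepN 1 (NCf (↑wn) i24) (NCf (↑wn) i25) (↑wn) →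
    indepN 1 (NCf (↑wn) i25) (NCf (↑wn) i26) (↑wn) →
    False := by decide
set_option maxHeartbeats 4000000 in
theorem lemB3 :
    ∀ i6 : Fin 5, indepN 14 (NCf 14 i6) 2 8 →
    ∀ i78 : Fin 5, indepN 14 (NCf 14 i6) 2 (NCf 14 i78) →
    ∀ i14 : Fin 5, indepN 14 (NCf 14 i14) 2 (NCf 14 i78) →
    ∀ i28 : Fin 5, indepN 14 (NCf 14 i14) 2 (NCf 14 i28) →
    indepN 14 2 (NCf 14 i28) 8 →
    False := by decide
set_option maxHeartbeats 4000000 in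
theorem lemB4 :
    ∀ i5 i30 : Fin 5, indepN 14 (NCf 14 i5) 2 (NCf 14 i30) →
    ∀ i78 : Fin 5, indepN 14 (NCf 14 i5) 2 (NCf 14 i78) →
    ∀ i14 : Fin 5, indepN 14 (NCf 14 i14) 2 (NCf 14 i78) →
    ∀ i27 : Fin 5, indepN 14 (NCf 14 i14) 2 (NCf 14 i27) →
    indepN 14 2 (NCf 14 i27) (NCf 14 i30) →
    False := by decide
set_option maxHeartbeats 4000000 in
theorem lemB5 :
    ∀ i6 : Fin 5, indepN 14 (NCf 14 i6) 2 4 →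
    ∀ i78 : Fin 5, indepN 14 (NCf 14 i6) 2 (NCf 14 i78) →
    ∀ i4 : Fin 5, indepN (NCf 14 i4) 14 2 (NCf 14 i78) →
    ∀ i30 : Fin 5, indepN (NCf 14 i4) 14 2 (NCf 14 i30) →
    indepN 14 2 4 (NCf 14 i30) →
    False := by decide
set_option maxHeartbeats 4000000 in
theorem lemB6 :
    indepN 14 2 4 8 →
    ∀ i3 : Fin 5, indepN (NCf 14 i3) 14 2 8 →
    ∀ i78 : Fin 5, indepN (NCf 14 i3) 14 2 (NCf 14 i78) →
    ∀ i5 : Fin 5, indepN (NCf 14 i5) 14 2 4 →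
    indepN (NCf 14 i5) 14 2 (NCf 14 i78) →
    False := by decide
set_option maxHeartbeats 4000000 in
theorem lemB14 :
    ∀ i3 i28 : Fin 5, indepN (NCf 14 i3) 14 2 (NCf 14 i28) →
    ∀ i78 : Fin 5, indepN (NCf 14 i3) 14 2 (NCf 14 i78) →
    ∀ i4 : Fin 5, indepN (NCf 14 i4) 14 2 (NCf 14 i78) →
    ∀ i27 : Fin 5, indepN (NCf 14 i4) 14 2 (NCf 14 i27) →
    indepN 14 2 (NCf 14 i27) (NCf 14 i28) →
    False := by decide
set_option maxHeartbeats 4000000 in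
theorem lemB27 :
    ∀ i28 : Fin 5, indepN 1 2 14 (NCf 14 i28) →
    ∀ i30 : Fin 5, indepN 1 2 14 (NCf 14 i30) →
    ∀ i4 : Fin 5, indepN (NCf 14 i4) 2 14 (NCf 14 i30) →
    ∀ i14 : Fin 5, indepN (NCf 14 i4) (NCf 14 i14) 2 14 →
    indepN (NCf 14 i14) 2 14 (NCf 14 i28) →
    False := by decide
set_option maxHeartbeats 4000000 in
theorem lemB28 :
    indepN 1 2 14 8 →
    ∀ i27 : Fin 5, indepN 1 2 (NCf 14 i27) 14 →
    ∀ i3 : Fin 5, indepN (NCf 14 i3) 2 14 8 →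
    ∀ i14 : Fin 5, indepN (NCf 14 i3) (NCf 14 i14) 2 14 →
    indepN (NCf 14 i14) 2 (NCf 14 i27) 14 →
    False := by decide
set_option maxHeartbeats 4000000 in
theorem lemB30 :
    indepN 1 2 4 14 →
    ∀ i27 : Fin 5, indepN 1 2 (NCf 14 i27) 14 →
    ∀ i4 : Fin 5, indepN (NCf 14 i4) 2 (NCf 14 i27) 14 →
    ∀ i5 : Fin 5, indepN (NCf 14 i4) (NCf 14 i5) 2 14 →
    indepN (NCf 14 i5) 2 4 14 →
    False := by decide
set_option maxHeartbeats 4000000 in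
theorem lemB78 :
    ∀ i3 i6 : Fin 5, indepN (NCf 14 i3) (NCf 14 i6) 2 14 →
    ∀ i14 : Fin 5, indepN (NCf 14 i3) (NCf 14 i14) 2 14 →
    ∀ i4 : Fin 5, indepN (NCf 14 i4) (NCf 14 i14) 2 14 →
    ∀ i5 : Fin 5, indepN (NCf 14 i4) (NCf 14 i5) 2 14 →
    indepN (NCf 14 i5) (NCf 14 i6) 2 14 →
    False := by decide

end Cell120Aux


/-- If a labeling of the 120-cell takes exactly 5 distinct values, then after
applying a suitable element of `GL₄(𝔽₂)` its set of values is exactly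
`{e₁, e₂, e₃, e₄, e₁+e₂+e₃+e₄}`. -/
theorem cell120_labeling_five_values_normal_form (l : Fin 120 → (Fin 4 → ZMod 2))
    (hl : IsCell120Labeling l) (h5 : (Set.range l).ncard = 5) :
    ∃ g : (Fin 4 → ZMod 2) ≃ₗ[ZMod 2] (Fin 4 → ZMod 2),
      Set.range (⇑g ∘ l) =
        {![1,0,0,0], ![0,1,0,0], ![0,0,1,0], ![0,0,0,1], ![1,1,1,1]} := by
  have hq0 : IsBasisFam4 ![l 0, l 21, l 22, l 29] := hl (0,21,22,29) (by decide)
  set φ : (Fin 4 → ZMod 2) ≃ₗ[ZMod 2] (Fin 4 → ZMod 2) :=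
    (Module.Basis.mk hq0.1 (le_of_eq hq0.2.symm)).equiv (Pi.basisFun (ZMod 2) (Fin 4)) (Equiv.refl _)
    with hφdef
  refine ⟨φ, ?_⟩
  set l' : Fin 120 → (Fin 4 → ZMod 2) := ⇑φ ∘ l with hl'def
  have hl' : IsCell120Labeling l' := labeling_comp l φ hl
  have hφ : ∀ i : Fin 4, φ (![l 0, l 21, l 22, l 29] i) = Pi.single i 1 := by
    intro i
    rw [hφdef]
    rw [show (![l 0, l 21, l 22, l 29] i)
        = (Module.Basis.mk hq0.1 (le_of_eq hq0.2.symm)) i from (Module.Basis.mk_apply _ _ i).symm]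
    rw [Module.Basis.equiv_apply]
    simp
  have hL0 : l' 0 = ![1,0,0,0] := by
    have h : φ (l 0) = Pi.single (0 : Fin 4) 1 := hφ 0
    exact h.trans (by decide)
  have hL21 : l' 21 = ![0,1,0,0] := by
    have h : φ (l 21) = Pi.single (1 : Fin 4) 1 := hφ 1
    exact h.trans (by decide)
  have hL22 : l' 22 = ![0,0,1,0] := by
    have h : φ (l 22) = Pi.single (2 : Fin 4) 1 := hφ 2
    exact h.trans (by decide)
  have hL29 : l' 29 = ![0,0,0,1] := by
    have h : φ (l 29) = Pi.single (3 : Fin 4) 1 := hφ 3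
    exact h.trans (by decide)
  have hcard : (Set.range l').ncard = 5 := by
    have hr : Set.range l' = ⇑φ '' Set.range l := by rw [hl'def, Set.range_comp]
    rw [hr, Set.ncard_image_of_injective _ φ.injective]
    exact h5
  have hex : ∃ w ∈ Set.range l',
      w ∉ ({![1,0,0,0], ![0,1,0,0], ![0,0,1,0], ![0,0,0,1]} : Set (Fin 4 → ZMod 2)) := by
    refine Set.not_subset.mp ?_
    intro hsub
    have k1 := Set.ncard_insert_le (![0,0,1,0]) ({![0,0,0,1]} : Set (Fin 4 → ZMod 2))
    have k2 := Set.ncard_insert_le (![0,1,0,0]) ({![0,0,1,0],![0,0,0,1]} : Set (Fin 4 → ZMod 2))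
    have k3 := Set.ncard_insert_le (![1,0,0,0])
      ({![0,1,0,0],![0,0,1,0],![0,0,0,1]} : Set (Fin 4 → ZMod 2))
    have k0 : ({![0,0,0,1]} : Set (Fin 4 → ZMod 2)).ncard = 1 := Set.ncard_singleton _
    have hle := Set.ncard_le_ncard hsub (Set.toFinite _)
    rw [hcard] at hle
    omega
  obtain ⟨w, hwr, hwE⟩ := hex
  simp only [Set.mem_insert_iff, Set.mem_singleton_iff, not_or] at hwE
  obtain ⟨hw1, hw2, hw3, hw4⟩ := hwE
  have m1 : ![1,0,0,0] ∉ ({![0,1,0,0],![0,0,1,0],![0,0,0,1],w} : Set (Fin 4 → ZMod 2)) := by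
    simp only [Set.mem_insert_iff, Set.mem_singleton_iff, not_or]
    exact ⟨by decide, by decide, by decide, fun h => hw1 h.symm⟩
  have m2 : ![0,1,0,0] ∉ ({![0,0,1,0],![0,0,0,1],w} : Set (Fin 4 → ZMod 2)) := by
    simp only [Set.mem_insert_iff, Set.mem_singleton_iff, not_or]
    exact ⟨by decide, by decide, fun h => hw2 h.symm⟩
  have m3 : ![0,0,1,0] ∉ ({![0,0,0,1],w} : Set (Fin 4 → ZMod 2)) := by
    simp only [Set.mem_insert_iff, Set.mem_singleton_iff, not_or]
    exact ⟨by decide, fun h => hw3 h.symm⟩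
  have m4 : ![0,0,0,1] ∉ ({w} : Set (Fin 4 → ZMod 2)) := by
    simp only [Set.mem_singleton_iff]
    exact fun h => hw4 h.symm
  have hn5 : ({![1,0,0,0], ![0,1,0,0], ![0,0,1,0], ![0,0,0,1], w}
      : Set (Fin 4 → ZMod 2)).ncard = 5 := by
    rw [Set.ncard_insert_of_notMem m1 (Set.toFinite _),
      Set.ncard_insert_of_notMem m2 (Set.toFinite _),
      Set.ncard_insert_of_notMem m3 (Set.toFinite _),
      Set.ncard_insert_of_notMem m4 (Set.toFinite _), Set.ncard_singleton]
  have hsub5 : ({![1,0,0,0], ![0,1,0,0], ![0,0,1,0], ![0,0,0,1], w}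
      : Set (Fin 4 → ZMod 2)) ⊆ Set.range l' := by
    intro x hx
    simp only [Set.mem_insert_iff, Set.mem_singleton_iff] at hx
    rcases hx with rfl | rfl | rfl | rfl | rfl
    · exact ⟨0, hL0⟩
    · exact ⟨21, hL21⟩
    · exact ⟨22, hL22⟩
    · exact ⟨29, hL29⟩
    · exact hwr
  have hrange : Set.range l'
      = ({![1,0,0,0], ![0,1,0,0], ![0,0,1,0], ![0,0,0,1], w} : Set (Fin 4 → ZMod 2)) :=
    (Set.eq_of_subset_of_ncard_le hsub5 (by rw [hcard, hn5]) (Set.toFinite _)).symm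
  have hencf : ∀ f : Fin 120, ∃ i : Fin 5, encV (l' f) = NCf (encV w) i := by
    intro f
    have hm : l' f ∈ Set.range l' := Set.mem_range_self f
    rw [hrange] at hm
    simp only [Set.mem_insert_iff, Set.mem_singleton_iff] at hm
    rcases hm with h | h | h | h | h
    · exact ⟨0, by rw [h, encE1]; rfl⟩
    · exact ⟨1, by rw [h, encE2]; rfl⟩
    · exact ⟨2, by rw [h, encE3]; rfl⟩
    · exact ⟨3, by rw [h, encE4]; rfl⟩
    · exact ⟨4, by rw [h]; rfl⟩
  have hwKey : w = ![1,1,1,1] := by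
    by_contra h15
    have hw15 : encV w ≠ 15 := fun hh => h15 (encV15 w hh)
    by_cases h14 : w = ![0,1,1,1]
    · have hwe : encV w = 14 := by rw [h14]; rfl
      by_cases hb3 : l' 3 = w
      ·
        obtain ⟨i6, hi6⟩ := hencf 6
        obtain ⟨i14, hi14⟩ := hencf 14
        obtain ⟨i28, hi28⟩ := hencf 28
        obtain ⟨i78, hi78⟩ := hencf 78
        have c1 := bridge (hl' (3,6,21,29) (by decide))
        have c2 := bridge (hl' (3,6,21,78) (by decide))
        have c3 := bridge (hl' (3,14,21,78) (by decide))
        have c4 := bridge (hl' (3,14,21,28) (by decide))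
        have c5 := bridge (hl' (3,21,28,29) (by decide))
        simp only [hb3, hi6, hi14, hi28, hi78, hL0, hL21, hL22, hL29, hwe, encE1, encE2, encE3, encE4] at c1 c2 c3 c4 c5
        exact lemB3 i6 c1 i78 c2 i14 c3 i28 c4 c5
      by_cases hb4 : l' 4 = w
      ·
        obtain ⟨i5, hi5⟩ := hencf 5
        obtain ⟨i14, hi14⟩ := hencf 14
        obtain ⟨i27, hi27⟩ := hencf 27
        obtain ⟨i30, hi30⟩ := hencf 30
        obtain ⟨i78, hi78⟩ := hencf 78
        have c1 := bridge (hl' (4,5,21,30) (by decide))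
        have c2 := bridge (hl' (4,5,21,78) (by decide))
        have c3 := bridge (hl' (4,14,21,78) (by decide))
        have c4 := bridge (hl' (4,14,21,27) (by decide))
        have c5 := bridge (hl' (4,21,27,30) (by decide))
        simp only [hb4, hi5, hi14, hi27, hi30, hi78, hL0, hL21, hL22, hL29, hwe, encE1, encE2, encE3, encE4] at c1 c2 c3 c4 c5
        exact lemB4 i5 i30 c1 i78 c2 i14 c3 i27 c4 c5
      by_cases hb5 : l' 5 = w
      ·
        obtain ⟨i4, hi4⟩ := hencf 4
        obtain ⟨i6, hi6⟩ := hencf 6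
        obtain ⟨i30, hi30⟩ := hencf 30
        obtain ⟨i78, hi78⟩ := hencf 78
        have c1 := bridge (hl' (5,6,21,22) (by decide))
        have c2 := bridge (hl' (5,6,21,78) (by decide))
        have c3 := bridge (hl' (4,5,21,78) (by decide))
        have c4 := bridge (hl' (4,5,21,30) (by decide))
        have c5 := bridge (hl' (5,21,22,30) (by decide))
        simp only [hb5, hi4, hi6, hi30, hi78, hL0, hL21, hL22, hL29, hwe, encE1, encE2, encE3, encE4] at c1 c2 c3 c4 c5
        exact lemB5 i6 c1 i78 c2 i4 c3 i30 c4 c5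
      by_cases hb6 : l' 6 = w
      ·
        obtain ⟨i3, hi3⟩ := hencf 3
        obtain ⟨i5, hi5⟩ := hencf 5
        obtain ⟨i78, hi78⟩ := hencf 78
        have c1 := bridge (hl' (6,21,22,29) (by decide))
        have c2 := bridge (hl' (3,6,21,29) (by decide))
        have c3 := bridge (hl' (3,6,21,78) (by decide))
        have c4 := bridge (hl' (5,6,21,22) (by decide))
        have c5 := bridge (hl' (5,6,21,78) (by decide))
        simp only [hb6, hi3, hi5, hi78, hL0, hL21, hL22, hL29, hwe, encE1, encE2, encE3, encE4] at c1 c2 c3 c4 c5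
        exact lemB6 c1 i3 c2 i78 c3 i5 c4 c5
      by_cases hb14 : l' 14 = w
      ·
        obtain ⟨i3, hi3⟩ := hencf 3
        obtain ⟨i4, hi4⟩ := hencf 4
        obtain ⟨i27, hi27⟩ := hencf 27
        obtain ⟨i28, hi28⟩ := hencf 28
        obtain ⟨i78, hi78⟩ := hencf 78
        have c1 := bridge (hl' (3,14,21,28) (by decide))
        have c2 := bridge (hl' (3,14,21,78) (by decide))
        have c3 := bridge (hl' (4,14,21,78) (by decide))
        have c4 := bridge (hl' (4,14,21,27) (by decide))
        have c5 := bridge (hl' (14,21,27,28) (by decide))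
        simp only [hb14, hi3, hi4, hi27, hi28, hi78, hL0, hL21, hL22, hL29, hwe, encE1, encE2, encE3, encE4] at c1 c2 c3 c4 c5
        exact lemB14 i3 i28 c1 i78 c2 i4 c3 i27 c4 c5
      by_cases hb27 : l' 27 = w
      ·
        obtain ⟨i4, hi4⟩ := hencf 4
        obtain ⟨i14, hi14⟩ := hencf 14
        obtain ⟨i28, hi28⟩ := hencf 28
        obtain ⟨i30, hi30⟩ := hencf 30
        have c1 := bridge (hl' (0,21,27,28) (by decide))
        have c2 := bridge (hl' (0,21,27,30) (by decide))
        have c3 := bridge (hl' (4,21,27,30) (by decide))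
        have c4 := bridge (hl' (4,14,21,27) (by decide))
        have c5 := bridge (hl' (14,21,27,28) (by decide))
        simp only [hb27, hi4, hi14, hi28, hi30, hL0, hL21, hL22, hL29, hwe, encE1, encE2, encE3, encE4] at c1 c2 c3 c4 c5
        exact lemB27 i28 c1 i30 c2 i4 c3 i14 c4 c5
      by_cases hb28 : l' 28 = w
      ·
        obtain ⟨i3, hi3⟩ := hencf 3
        obtain ⟨i14, hi14⟩ := hencf 14
        obtain ⟨i27, hi27⟩ := hencf 27
        have c1 := bridge (hl' (0,21,28,29) (by decide))
        have c2 := bridge (hl' (0,21,27,28) (by decide))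
        have c3 := bridge (hl' (3,21,28,29) (by decide))
        have c4 := bridge (hl' (3,14,21,28) (by decide))
        have c5 := bridge (hl' (14,21,27,28) (by decide))
        simp only [hb28, hi3, hi14, hi27, hL0, hL21, hL22, hL29, hwe, encE1, encE2, encE3, encE4] at c1 c2 c3 c4 c5
        exact lemB28 c1 i27 c2 i3 c3 i14 c4 c5
      by_cases hb30 : l' 30 = w
      ·
        obtain ⟨i4, hi4⟩ := hencf 4
        obtain ⟨i5, hi5⟩ := hencf 5
        obtain ⟨i27, hi27⟩ := hencf 27
        have c1 := bridge (hl' (0,21,22,30) (by decide))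
        have c2 := bridge (hl' (0,21,27,30) (by decide))
        have c3 := bridge (hl' (4,21,27,30) (by decide))
        have c4 := bridge (hl' (4,5,21,30) (by decide))
        have c5 := bridge (hl' (5,21,22,30) (by decide))
        simp only [hb30, hi4, hi5, hi27, hL0, hL21, hL22, hL29, hwe, encE1, encE2, encE3, encE4] at c1 c2 c3 c4 c5
        exact lemB30 c1 i27 c2 i4 c3 i5 c4 c5
      by_cases hb78 : l' 78 = w
      ·
        obtain ⟨i3, hi3⟩ := hencf 3
        obtain ⟨i4, hi4⟩ := hencf 4
        obtain ⟨i5, hi5⟩ := hencf 5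
        obtain ⟨i6, hi6⟩ := hencf 6
        obtain ⟨i14, hi14⟩ := hencf 14
        have c1 := bridge (hl' (3,6,21,78) (by decide))
        have c2 := bridge (hl' (3,14,21,78) (by decide))
        have c3 := bridge (hl' (4,14,21,78) (by decide))
        have c4 := bridge (hl' (4,5,21,78) (by decide))
        have c5 := bridge (hl' (5,6,21,78) (by decide))
        simp only [hb78, hi3, hi4, hi5, hi6, hi14, hL0, hL21, hL22, hL29, hwe, encE1, encE2, encE3, encE4] at c1 c2 c3 c4 c5
        exact lemB78 i3 i6 c1 i14 c2 i4 c3 i5 c4 c5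
      obtain ⟨i27, hi27⟩ := hencf 27
      have ne27 : NCf (encV w) i27 ≠ encV w := fun hh => hb27 (encV_inj _ _ (hi27.trans hh))
      obtain ⟨i28, hi28⟩ := hencf 28
      have ne28 : NCf (encV w) i28 ≠ encV w := fun hh => hb28 (encV_inj _ _ (hi28.trans hh))
      obtain ⟨i30, hi30⟩ := hencf 30
      have ne30 : NCf (encV w) i30 ≠ encV w := fun hh => hb30 (encV_inj _ _ (hi30.trans hh))
      have c1 := bridge (hl' (0,21,22,30) (by decide))
      have c2 := bridge (hl' (0,21,27,28) (by decide))
      have c3 := bridge (hl' (0,21,27,30) (by decide))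
      have c4 := bridge (hl' (0,21,28,29) (by decide))
      simp only [hi27, hi28, hi30, hL0, hL21, hL22, hL29, encE1, encE2, encE3, encE4] at c1 c2 c3 c4
      exact lemNo ⟨encV w, encV_lt w⟩ i30 ne30 c1 i27 ne27 i28 ne28 c2 c3 c4
    · have hw14n : encV w ≠ 14 := fun hh => h14 (encV14 w hh)
      by_cases hb23 : l' 23 = w
      ·
        obtain ⟨i26, hi26⟩ := hencf 26
        obtain ⟨i28, hi28⟩ := hencf 28
        obtain ⟨i31, hi31⟩ := hencf 31
        obtain ⟨i32, hi32⟩ := hencf 32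
        have c1 := bridge (hl' (0,23,26,29) (by decide))
        have c2 := bridge (hl' (0,23,26,32) (by decide))
        have c3 := bridge (hl' (0,23,28,29) (by decide))
        have c4 := bridge (hl' (0,23,28,31) (by decide))
        have c5 := bridge (hl' (0,23,31,32) (by decide))
        simp only [hb23, hi26, hi28, hi31, hi32, hL0, hL21, hL22, hL29, encE1, encE2, encE3, encE4] at c1 c2 c3 c4 c5
        exact lemA23 ⟨encV w, encV_lt w⟩ hw15 hw14n i26 c1 i32 c2 i28 c3 i31 c4 c5
      by_cases hb24 : l' 24 = w
      ·
        obtain ⟨i25, hi25⟩ := hencf 25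
        obtain ⟨i27, hi27⟩ := hencf 27
        obtain ⟨i30, hi30⟩ := hencf 30
        obtain ⟨i31, hi31⟩ := hencf 31
        obtain ⟨i32, hi32⟩ := hencf 32
        have c1 := bridge (hl' (0,24,25,30) (by decide))
        have c2 := bridge (hl' (0,24,25,32) (by decide))
        have c3 := bridge (hl' (0,24,27,30) (by decide))
        have c4 := bridge (hl' (0,24,27,31) (by decide))
        have c5 := bridge (hl' (0,24,31,32) (by decide))
        simp only [hb24, hi25, hi27, hi30, hi31, hi32, hL0, hL21, hL22, hL29, encE1, encE2, encE3, encE4] at c1 c2 c3 c4 c5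
        exact lemA24 ⟨encV w, encV_lt w⟩ hw15 hw14n i25 i30 c1 i32 c2 i27 c3 i31 c4 c5
      by_cases hb25 : l' 25 = w
      ·
        obtain ⟨i24, hi24⟩ := hencf 24
        obtain ⟨i26, hi26⟩ := hencf 26
        obtain ⟨i30, hi30⟩ := hencf 30
        obtain ⟨i32, hi32⟩ := hencf 32
        have c1 := bridge (hl' (0,22,25,26) (by decide))
        have c2 := bridge (hl' (0,22,25,30) (by decide))
        have c3 := bridge (hl' (0,24,25,30) (by decide))
        have c4 := bridge (hl' (0,24,25,32) (by decide))
        have c5 := bridge (hl' (0,25,26,32) (by decide))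
        simp only [hb25, hi24, hi26, hi30, hi32, hL0, hL21, hL22, hL29, encE1, encE2, encE3, encE4] at c1 c2 c3 c4 c5
        exact lemA25 ⟨encV w, encV_lt w⟩ hw15 hw14n i26 c1 i30 c2 i24 c3 i32 c4 c5
      by_cases hb26 : l' 26 = w
      ·
        obtain ⟨i23, hi23⟩ := hencf 23
        obtain ⟨i25, hi25⟩ := hencf 25
        obtain ⟨i32, hi32⟩ := hencf 32
        have c1 := bridge (hl' (0,22,26,29) (by decide))
        have c2 := bridge (hl' (0,22,25,26) (by decide))
        have c3 := bridge (hl' (0,23,26,29) (by decide))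
        have c4 := bridge (hl' (0,23,26,32) (by decide))
        have c5 := bridge (hl' (0,25,26,32) (by decide))
        simp only [hb26, hi23, hi25, hi32, hL0, hL21, hL22, hL29, encE1, encE2, encE3, encE4] at c1 c2 c3 c4 c5
        exact lemA26 ⟨encV w, encV_lt w⟩ hw15 hw14n c1 i25 c2 i23 c3 i32 c4 c5
      by_cases hb27 : l' 27 = w
      ·
        obtain ⟨i24, hi24⟩ := hencf 24
        obtain ⟨i28, hi28⟩ := hencf 28
        obtain ⟨i30, hi30⟩ := hencf 30
        obtain ⟨i31, hi31⟩ := hencf 31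
        have c1 := bridge (hl' (0,21,27,28) (by decide))
        have c2 := bridge (hl' (0,21,27,30) (by decide))
        have c3 := bridge (hl' (0,24,27,30) (by decide))
        have c4 := bridge (hl' (0,24,27,31) (by decide))
        have c5 := bridge (hl' (0,27,28,31) (by decide))
        simp only [hb27, hi24, hi28, hi30, hi31, hL0, hL21, hL22, hL29, encE1, encE2, encE3, encE4] at c1 c2 c3 c4 c5
        exact lemA27 ⟨encV w, encV_lt w⟩ hw15 hw14n i28 c1 i30 c2 i24 c3 i31 c4 c5
      by_cases hb28 : l' 28 = w
      ·
        obtain ⟨i23, hi23⟩ := hencf 23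
        obtain ⟨i27, hi27⟩ := hencf 27
        obtain ⟨i31, hi31⟩ := hencf 31
        have c1 := bridge (hl' (0,21,28,29) (by decide))
        have c2 := bridge (hl' (0,21,27,28) (by decide))
        have c3 := bridge (hl' (0,23,28,29) (by decide))
        have c4 := bridge (hl' (0,23,28,31) (by decide))
        have c5 := bridge (hl' (0,27,28,31) (by decide))
        simp only [hb28, hi23, hi27, hi31, hL0, hL21, hL22, hL29, encE1, encE2, encE3, encE4] at c1 c2 c3 c4 c5
        exact lemA28 ⟨encV w, encV_lt w⟩ hw15 hw14n c1 i27 c2 i23 c3 i31 c4 c5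
      by_cases hb30 : l' 30 = w
      ·
        obtain ⟨i24, hi24⟩ := hencf 24
        obtain ⟨i25, hi25⟩ := hencf 25
        obtain ⟨i27, hi27⟩ := hencf 27
        have c1 := bridge (hl' (0,21,22,30) (by decide))
        have c2 := bridge (hl' (0,21,27,30) (by decide))
        have c3 := bridge (hl' (0,22,25,30) (by decide))
        have c4 := bridge (hl' (0,24,25,30) (by decide))
        have c5 := bridge (hl' (0,24,27,30) (by decide))
        simp only [hb30, hi24, hi25, hi27, hL0, hL21, hL22, hL29, encE1, encE2, encE3, encE4] at c1 c2 c3 c4 c5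
        exact lemA30 ⟨encV w, encV_lt w⟩ hw15 hw14n c1 i27 c2 i25 c3 i24 c4 c5
      by_cases hb31 : l' 31 = w
      ·
        obtain ⟨i23, hi23⟩ := hencf 23
        obtain ⟨i24, hi24⟩ := hencf 24
        obtain ⟨i27, hi27⟩ := hencf 27
        obtain ⟨i28, hi28⟩ := hencf 28
        obtain ⟨i32, hi32⟩ := hencf 32
        have c1 := bridge (hl' (0,23,28,31) (by decide))
        have c2 := bridge (hl' (0,23,31,32) (by decide))
        have c3 := bridge (hl' (0,24,31,32) (by decide))
        have c4 := bridge (hl' (0,24,27,31) (by decide))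
        have c5 := bridge (hl' (0,27,28,31) (by decide))
        simp only [hb31, hi23, hi24, hi27, hi28, hi32, hL0, hL21, hL22, hL29, encE1, encE2, encE3, encE4] at c1 c2 c3 c4 c5
        exact lemA31 ⟨encV w, encV_lt w⟩ hw15 hw14n i23 i28 c1 i32 c2 i24 c3 i27 c4 c5
      by_cases hb32 : l' 32 = w
      ·
        obtain ⟨i23, hi23⟩ := hencf 23
        obtain ⟨i24, hi24⟩ := hencf 24
        obtain ⟨i25, hi25⟩ := hencf 25
        obtain ⟨i26, hi26⟩ := hencf 26
        obtain ⟨i31, hi31⟩ := hencf 31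
        have c1 := bridge (hl' (0,23,26,32) (by decide))
        have c2 := bridge (hl' (0,23,31,32) (by decide))
        have c3 := bridge (hl' (0,24,31,32) (by decide))
        have c4 := bridge (hl' (0,24,25,32) (by decide))
        have c5 := bridge (hl' (0,25,26,32) (by decide))
        simp only [hb32, hi23, hi24, hi25, hi26, hi31, hL0, hL21, hL22, hL29, encE1, encE2, encE3, encE4] at c1 c2 c3 c4 c5
        exact lemA32 ⟨encV w, encV_lt w⟩ hw15 hw14n i23 i26 c1 i31 c2 i24 c3 i25 c4 c5
      obtain ⟨i27, hi27⟩ := hencf 27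
      have ne27 : NCf (encV w) i27 ≠ encV w := fun hh => hb27 (encV_inj _ _ (hi27.trans hh))
      obtain ⟨i28, hi28⟩ := hencf 28
      have ne28 : NCf (encV w) i28 ≠ encV w := fun hh => hb28 (encV_inj _ _ (hi28.trans hh))
      obtain ⟨i30, hi30⟩ := hencf 30
      have ne30 : NCf (encV w) i30 ≠ encV w := fun hh => hb30 (encV_inj _ _ (hi30.trans hh))
      have c1 := bridge (hl' (0,21,22,30) (by decide))
      have c2 := bridge (hl' (0,21,27,28) (by decide))
      have c3 := bridge (hl' (0,21,27,30) (by decide))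
      have c4 := bridge (hl' (0,21,28,29) (by decide))
      simp only [hi27, hi28, hi30, hL0, hL21, hL22, hL29, encE1, encE2, encE3, encE4] at c1 c2 c3 c4
      exact lemNo ⟨encV w, encV_lt w⟩ i30 ne30 c1 i27 ne27 i28 ne28 c2 c3 c4
  rw [hrange, hwKey]
end
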